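/- Let σ be a permutation of [n+1]. For i ∈ {0,1,…,n+1} let V_i := {0, n+2} ∪ (D △ σ⁻¹({1,…,i})) (symmetric difference, with σ⁻¹(∅) interpreted as ∅), and let π_i be the set of diagonals {a,b} where a < b are consecutive elements of V_i in the order 0 < 1 < … < n+2. Then the set T of internal diagonals contained in π_0 ∪ π_1 ∪ … ∪ π_{n+1} is a triangulation of P, and σ is a linear extension of the spine of T, i.e., σ(s_δ) < σ(t_δ) for every δ ∈ T. -/
import Mathlib


attribute [local instance] Classical.propDecidable

noncomputable section

namespace Spines

/-- Position of vertex `v ∈ {0,…,n+2}` in the counterclockwise boundary cyclic order: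
`0`, then the elements of `D` in increasing order, then `n+2`, then the elements of `U`
in decreasing order. -/
def pos (n : ℕ) (D U : Finset ℕ) (v : ℕ) : ℕ :=
  if v = 0 then 0
  else if v = n + 2 then D.card + 1
  else if v ∈ D then 1 + (D.filter (fun d => d < v)).card
  else D.card + 2 + (U.filter (fun u => v < u)).card

/-- Cyclic distance from `a` to `v` in counterclockwise direction. -/
def relpos (n : ℕ) (D U : Finset ℕ) (a v : ℕ) : ℕ :=
  (pos n D U v + (n + 3) - pos n D U a) % (n + 3)

/-- `v` lies strictly inside the counterclockwise boundary arc from `a` to `b`. -/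
def StrictBetween (n : ℕ) (D U : Finset ℕ) (a b v : ℕ) : Prop :=
  v ≤ n + 2 ∧ 0 < relpos n D U a v ∧ relpos n D U a v < relpos n D U a b

/-- A diagonal, encoded as an ordered pair `(a,b)` with `a < b ≤ n+2`. -/
def IsDiag (n : ℕ) (δ : ℕ × ℕ) : Prop := δ.1 < δ.2 ∧ δ.2 ≤ n + 2

/-- A boundary edge: the endpoints are adjacent in the cyclic order. -/
def IsBoundaryEdge (n : ℕ) (D U : Finset ℕ) (δ : ℕ × ℕ) : Prop :=
  IsDiag n δ ∧ (relpos n D U δ.1 δ.2 = 1 ∨ relpos n D U δ.2 δ.1 = 1)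

/-- An internal diagonal. -/
def IsInternalDiag (n : ℕ) (D U : Finset ℕ) (δ : ℕ × ℕ) : Prop :=
  IsDiag n δ ∧ ¬ IsBoundaryEdge n D U δ

/-- Two diagonals cross: the four endpoints are pairwise distinct and exactly one
endpoint of the second lies strictly inside each of the two arcs determined by the first. -/
def Cross (n : ℕ) (D U : Finset ℕ) (δ δ' : ℕ × ℕ) : Prop :=
  δ.1 ≠ δ.2 ∧ δ'.1 ≠ δ'.2 ∧ δ.1 ≠ δ'.1 ∧ δ.1 ≠ δ'.2 ∧ δ.2 ≠ δ'.1 ∧ δ.2 ≠ δ'.2 ∧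
  ((StrictBetween n D U δ.1 δ.2 δ'.1 ∧ StrictBetween n D U δ.2 δ.1 δ'.2) ∨
   (StrictBetween n D U δ.1 δ.2 δ'.2 ∧ StrictBetween n D U δ.2 δ.1 δ'.1))

/-- A triangulation: a maximal set of pairwise non-crossing internal diagonals. -/
def IsTriangulation (n : ℕ) (D U : Finset ℕ) (T : Finset (ℕ × ℕ)) : Prop :=
  (∀ δ ∈ T, IsInternalDiag n D U δ) ∧
  (∀ δ ∈ T, ∀ δ' ∈ T, ¬ Cross n D U δ δ') ∧
  (∀ δ, IsInternalDiag n D U δ → δ ∉ T → ∃ δ' ∈ T, Cross n D U δ δ')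

/-- `a` and `b` (with `a < b`) are joined by a diagonal of `T` or a boundary edge. -/
def EdgeOf (n : ℕ) (D U : Finset ℕ) (T : Finset (ℕ × ℕ)) (a b : ℕ) : Prop :=
  (a, b) ∈ T ∨ IsBoundaryEdge n D U (a, b)

/-- `{i,j,k}` with `i<j<k` is a triangle of the triangulation `T`. -/
def IsTriangleOf (n : ℕ) (D U : Finset ℕ) (T : Finset (ℕ × ℕ)) (i j k : ℕ) : Prop :=
  i < j ∧ j < k ∧ k ≤ n + 2 ∧
    EdgeOf n D U T i j ∧ EdgeOf n D U T j k ∧ EdgeOf n D U T i k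

/-- `Bel δ`: labels in `[n+1]` strictly inside the ccw arc from `δ.1` to `δ.2`,
together with the endpoints of `δ` lying in `U`. -/
def Bel (n : ℕ) (D U : Finset ℕ) (δ : ℕ × ℕ) : Finset ℕ :=
  (Finset.Icc 1 (n + 1)).filter
    (fun j => StrictBetween n D U δ.1 δ.2 j ∨ (j ∈ U ∧ (j = δ.1 ∨ j = δ.2)))

def bel (n : ℕ) (D U : Finset ℕ) (δ : ℕ × ℕ) : ℕ := (Bel n D U δ).card

def Abo (n : ℕ) (D U : Finset ℕ) (δ : ℕ × ℕ) : Finset ℕ :=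
  Finset.Icc 1 (n + 1) \ Bel n D U δ

/-- The coordinates of the point `x(T)` associated to a triangulation `T`. -/
def xcoord (n : ℕ) (D U : Finset ℕ) (T : Finset (ℕ × ℕ)) (j : ℕ) : ℝ :=
  if h : ∃ p : ℕ × ℕ, IsTriangleOf n D U T p.1 j p.2 then
    if j ∈ D then
      ((bel n D U (h.choose.1, j) : ℝ) + 1) * ((bel n D U (j, h.choose.2) : ℝ) + 1)
    else
      ((n : ℝ) + 2) -
        (((n : ℝ) + 2) - (bel n D U (h.choose.1, j) : ℝ)) *
          (((n : ℝ) + 2) - (bel n D U (j, h.choose.2) : ℝ))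
  else 0

/-- Middle vertex of the triple `{a,b,c}` with `a < b` and `c ∉ {a,b}`. -/
def midOf (a b c : ℕ) : ℕ := if c < a then a else if c < b then c else b

/-- `c` is the third vertex of a triangle of `T` containing the diagonal `δ`. -/
def TriWith (n : ℕ) (D U : Finset ℕ) (T : Finset (ℕ × ℕ)) (δ : ℕ × ℕ) (c : ℕ) : Prop :=
  if c < δ.1 then IsTriangleOf n D U T c δ.1 δ.2
  else if c < δ.2 then IsTriangleOf n D U T δ.1 c δ.2
  else IsTriangleOf n D U T δ.1 δ.2 c

/-- `s_δ`: middle vertex of the triangle of `T` below `δ` (third vertex strictly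
inside the ccw arc from `δ.1` to `δ.2`). -/
def spineSrc (n : ℕ) (D U : Finset ℕ) (T : Finset (ℕ × ℕ)) (δ : ℕ × ℕ) : ℕ :=
  if h : ∃ c, StrictBetween n D U δ.1 δ.2 c ∧ TriWith n D U T δ c then
    midOf δ.1 δ.2 h.choose
  else 0

/-- `t_δ`: middle vertex of the triangle of `T` above `δ` (third vertex strictly
inside the ccw arc from `δ.2` to `δ.1`). -/
def spineTgt (n : ℕ) (D U : Finset ℕ) (T : Finset (ℕ × ℕ)) (δ : ℕ × ℕ) : ℕ :=
  if h : ∃ c, StrictBetween n D U δ.2 δ.1 c ∧ TriWith n D U T δ c then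
    midOf δ.1 δ.2 h.choose
  else 0

/-- `(p,q)` is an arc of the spine of `T`. -/
def SpineArc (n : ℕ) (D U : Finset ℕ) (T : Finset (ℕ × ℕ)) (p q : ℕ) : Prop :=
  ∃ δ ∈ T, spineSrc n D U T δ = p ∧ spineTgt n D U T δ = q

/-- The finite set of all triangulations of the polygon. -/
def allTri (n : ℕ) (D U : Finset ℕ) : Finset (Finset (ℕ × ℕ)) :=
  ((Finset.range (n + 3) ×ˢ Finset.range (n + 3)).filter
      (fun δ => IsInternalDiag n D U δ)).powerset.filter
    (fun T => IsTriangulation n D U T)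

end Spines

namespace Spines

/-- `σ⁻¹({1,…,i})` inside the label set `[n+1]`. -/
def sigmaPre (n : ℕ) (σ : Equiv.Perm ℕ) (i : ℕ) : Finset ℕ :=
  (Finset.Icc 1 (n + 1)).filter (fun j => σ j ∈ Finset.Icc 1 i)

/-- The vertex set `V_i = {0, n+2} ∪ (D △ σ⁻¹({1,…,i}))` of the sweeping path `π_i`. -/
def Vset (n : ℕ) (D : Finset ℕ) (σ : Equiv.Perm ℕ) (i : ℕ) : Finset ℕ :=
  insert 0 (insert (n + 2) (symmDiff D (sigmaPre n σ i)))

/-- `δ` joins two consecutive elements of `V` (in the order `0 < 1 < … < n+2`). -/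
def ConsecIn (V : Finset ℕ) (δ : ℕ × ℕ) : Prop :=
  δ.1 ∈ V ∧ δ.2 ∈ V ∧ δ.1 < δ.2 ∧ ∀ c ∈ V, ¬ (δ.1 < c ∧ c < δ.2)

/-- The set of internal diagonals contained in `π_0 ∪ π_1 ∪ … ∪ π_{n+1}`. -/
def sigmaTri (n : ℕ) (D U : Finset ℕ) (σ : Equiv.Perm ℕ) : Finset (ℕ × ℕ) :=
  (Finset.range (n + 3) ×ˢ Finset.range (n + 3)).filter
    (fun δ => IsInternalDiag n D U δ ∧
      ∃ i ∈ Finset.range (n + 2), ConsecIn (Vset n D σ i) δ)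

section Basic

variable {n : ℕ} {D U : Finset ℕ}

/-- Abbreviation context: `hUD : D ∪ U = Finset.Icc 1 (n+1)`, `hdisj : Disjoint D U`. -/

lemma mem_D_bounds (hUD : D ∪ U = Finset.Icc 1 (n + 1)) {v : ℕ} (hv : v ∈ D) :
    1 ≤ v ∧ v ≤ n + 1 := by
  have : v ∈ D ∪ U := Finset.mem_union_left _ hv
  rw [hUD, Finset.mem_Icc] at this; exact this

lemma mem_U_bounds (hUD : D ∪ U = Finset.Icc 1 (n + 1)) {v : ℕ} (hv : v ∈ U) :
    1 ≤ v ∧ v ≤ n + 1 := by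
  have : v ∈ D ∪ U := Finset.mem_union_right _ hv
  rw [hUD, Finset.mem_Icc] at this; exact this

lemma not_mem_U_of_D (hdisj : Disjoint D U) {v : ℕ} (hv : v ∈ D) : v ∉ U :=
  fun h => (Finset.disjoint_left.1 hdisj) hv h

lemma label_cases (hUD : D ∪ U = Finset.Icc 1 (n + 1)) {v : ℕ} (h1 : 1 ≤ v)
    (h2 : v ≤ n + 1) : v ∈ D ∨ v ∈ U := by
  have : v ∈ D ∪ U := by rw [hUD, Finset.mem_Icc]; exact ⟨h1, h2⟩
  exact Finset.mem_union.1 this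

lemma vert_cases (hUD : D ∪ U = Finset.Icc 1 (n + 1)) {v : ℕ} (hv : v ≤ n + 2) :
    v = 0 ∨ v = n + 2 ∨ v ∈ D ∨ v ∈ U := by
  rcases Nat.eq_zero_or_pos v with h | h
  · exact Or.inl h
  · rcases eq_or_lt_of_le hv with h2 | h2
    · exact Or.inr (Or.inl h2)
    · rcases label_cases hUD h (by omega) with h3 | h3
      · exact Or.inr (Or.inr (Or.inl h3))
      · exact Or.inr (Or.inr (Or.inr h3))

lemma cardDU (hUD : D ∪ U = Finset.Icc 1 (n + 1)) (hdisj : Disjoint D U) :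
    D.card + U.card = n + 1 := by
  rw [← Finset.card_union_of_disjoint hdisj, hUD, Nat.card_Icc]; omega

lemma pos_zero : pos n D U 0 = 0 := by simp [pos]

lemma pos_top : pos n D U (n + 2) = D.card + 1 := by simp [pos]

lemma pos_D (hUD : D ∪ U = Finset.Icc 1 (n + 1)) {v : ℕ} (hv : v ∈ D) :
    pos n D U v = 1 + (D.filter (fun d => d < v)).card := by
  obtain ⟨h1, h2⟩ := mem_D_bounds hUD hv
  rw [pos, if_neg (by omega), if_neg (by omega), if_pos hv]

lemma pos_U (hUD : D ∪ U = Finset.Icc 1 (n + 1)) (hdisj : Disjoint D U) {v : ℕ}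
    (hv : v ∈ U) : pos n D U v = D.card + 2 + (U.filter (fun u => v < u)).card := by
  obtain ⟨h1, h2⟩ := mem_U_bounds hUD hv
  rw [pos, if_neg (by omega), if_neg (by omega), if_neg (fun h => not_mem_U_of_D hdisj h hv)]

lemma pos_D_bounds (hUD : D ∪ U = Finset.Icc 1 (n + 1)) {v : ℕ} (hv : v ∈ D) :
    1 ≤ pos n D U v ∧ pos n D U v ≤ D.card := by
  rw [pos_D hUD hv]
  have h : (D.filter (fun d => d < v)).card < D.card := by
    apply Finset.card_lt_card
    constructor
    · exact Finset.filter_subset _ _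
    · intro hsub
      have := hsub hv
      simp at this
  omega

lemma pos_U_bounds (hUD : D ∪ U = Finset.Icc 1 (n + 1)) (hdisj : Disjoint D U) {v : ℕ}
    (hv : v ∈ U) : D.card + 2 ≤ pos n D U v ∧ pos n D U v ≤ n + 2 := by
  rw [pos_U hUD hdisj hv]
  have h : (U.filter (fun u => v < u)).card < U.card := by
    apply Finset.card_lt_card
    constructor
    · exact Finset.filter_subset _ _
    · intro hsub
      have := hsub hv
      simp at this
  have := cardDU hUD hdisj
  omega

lemma pos_le (hUD : D ∪ U = Finset.Icc 1 (n + 1)) (hdisj : Disjoint D U) {v : ℕ}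
    (hv : v ≤ n + 2) : pos n D U v ≤ n + 2 := by
  have hc := cardDU hUD hdisj
  rcases vert_cases hUD hv with h | h | h | h
  · rw [h, pos_zero]; omega
  · rw [h, pos_top]; omega
  · have := (pos_D_bounds hUD h).2; omega
  · exact (pos_U_bounds hUD hdisj h).2

lemma pos_D_mono (hUD : D ∪ U = Finset.Icc 1 (n + 1)) {v w : ℕ} (hv : v ∈ D) (hw : w ∈ D)
    (hvw : v < w) : pos n D U v < pos n D U w := by
  rw [pos_D hUD hv, pos_D hUD hw]
  have : (D.filter (fun d => d < v)).card < (D.filter (fun d => d < w)).card := by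
    apply Finset.card_lt_card
    constructor
    · intro x hx
      simp only [Finset.mem_filter] at hx ⊢
      exact ⟨hx.1, by omega⟩
    · intro hsub
      have : v ∈ D.filter (fun d => d < w) := by simp [hv, hvw]
      have := hsub this
      simp at this
  omega

lemma pos_U_anti (hUD : D ∪ U = Finset.Icc 1 (n + 1)) (hdisj : Disjoint D U) {v w : ℕ}
    (hv : v ∈ U) (hw : w ∈ U) (hvw : v < w) : pos n D U w < pos n D U v := by
  rw [pos_U hUD hdisj hv, pos_U hUD hdisj hw]
  have : (U.filter (fun u => w < u)).card < (U.filter (fun u => v < u)).card := by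
    apply Finset.card_lt_card
    constructor
    · intro x hx
      simp only [Finset.mem_filter] at hx ⊢
      exact ⟨hx.1, by omega⟩
    · intro hsub
      have : w ∈ U.filter (fun u => v < u) := by simp [hw, hvw]
      have := hsub this
      simp at this
  omega

lemma pos_inj (hUD : D ∪ U = Finset.Icc 1 (n + 1)) (hdisj : Disjoint D U) {v w : ℕ}
    (hv : v ≤ n + 2) (hw : w ≤ n + 2) (h : pos n D U v = pos n D U w) : v = w := by
  have hc := cardDU hUD hdisj
  rcases vert_cases hUD hv with h1 | h1 | h1 | h1 <;>
    rcases vert_cases hUD hw with h2 | h2 | h2 | h2 <;>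
      subst_vars <;> try rfl
  all_goals (
    first
    | (exfalso
       simp only [pos_zero, pos_top] at h
       first
       | omega
       | (try have b1 := pos_D_bounds hUD h1
          try have b1 := pos_U_bounds hUD hdisj h1
          try have b2 := pos_D_bounds hUD h2
          try have b2 := pos_U_bounds hUD hdisj h2
          omega)
       )
    | skip)
  · -- both in D
    rcases lt_trichotomy v w with hh | hh | hh
    · have := pos_D_mono hUD h1 h2 hh; omega
    · exact hh
    · have := pos_D_mono hUD h2 h1 hh; omega
  · -- v ∈ D, w ∈ U
    exfalso
    have b1 := pos_D_bounds hUD h1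
    have b2 := pos_U_bounds hUD hdisj h2
    omega
  · exfalso
    have b1 := pos_U_bounds hUD hdisj h1
    have b2 := pos_D_bounds hUD h2
    omega
  · rcases lt_trichotomy v w with hh | hh | hh
    · have := pos_U_anti hUD hdisj h1 h2 hh; omega
    · exact hh
    · have := pos_U_anti hUD hdisj h2 h1 hh; omega

/-- linear distance on the circle of circumference `n+3`. -/
def pdist (n : ℕ) (p q : ℕ) : ℕ := if p ≤ q then q - p else q + (n + 3) - p

lemma relpos_eq (hUD : D ∪ U = Finset.Icc 1 (n + 1)) (hdisj : Disjoint D U) {a v : ℕ}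
    (ha : a ≤ n + 2) (hv : v ≤ n + 2) :
    relpos n D U a v = pdist n (pos n D U a) (pos n D U v) := by
  have pa := pos_le hUD hdisj ha
  have pv := pos_le hUD hdisj hv
  rw [relpos, pdist]
  split_ifs with h
  · have : pos n D U v + (n + 3) - pos n D U a
        = (pos n D U v - pos n D U a) + (n + 3) := by omega
    rw [this, Nat.add_mod_right]
    exact Nat.mod_eq_of_lt (by omega)
  · exact Nat.mod_eq_of_lt (by omega)

lemma sb_iff (hUD : D ∪ U = Finset.Icc 1 (n + 1)) (hdisj : Disjoint D U) {a b v : ℕ}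
    (ha : a ≤ n + 2) (hb : b ≤ n + 2) :
    StrictBetween n D U a b v ↔ v ≤ n + 2 ∧
      0 < pdist n (pos n D U a) (pos n D U v) ∧
      pdist n (pos n D U a) (pos n D U v) < pdist n (pos n D U a) (pos n D U b) := by
  constructor
  · rintro ⟨hv, h1, h2⟩
    rw [relpos_eq hUD hdisj ha hv, relpos_eq hUD hdisj ha hb] at *
    exact ⟨hv, h1, h2⟩
  · rintro ⟨hv, h1, h2⟩
    refine ⟨hv, ?_, ?_⟩
    · rw [relpos_eq hUD hdisj ha hv]; exact h1
    · rw [relpos_eq hUD hdisj ha hv, relpos_eq hUD hdisj ha hb]; exact h2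

end Basic
section Arith

variable {n : ℕ} {D U : Finset ℕ} {a b c d v w : ℕ}

lemma sb_le (h : StrictBetween n D U a b v) : v ≤ n + 2 := h.1

lemma sb_ne_left (h : StrictBetween n D U a b v) : v ≠ a := by
  rintro rfl
  have h0 : relpos n D U v v = 0 := by
    simp [relpos, Nat.add_sub_cancel_left, Nat.mod_self]
  have := h.2.1
  omega

lemma sb_ne_right (h : StrictBetween n D U a b v) : v ≠ b := by
  rintro rfl
  exact absurd h.2.2 (lt_irrefl _)

end Arith

section Arith2

variable {n : ℕ} {D U : Finset ℕ} {a b c d v w : ℕ}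
lemma pos_ne (hUD : D ∪ U = Finset.Icc 1 (n + 1)) (hdisj : Disjoint D U) (hv : v ≤ n + 2) (hw : w ≤ n + 2) (hne : v ≠ w) :
    pos n D U v ≠ pos n D U w := fun h => hne (pos_inj hUD hdisj hv hw h)

lemma sb_asymm (hUD : D ∪ U = Finset.Icc 1 (n + 1)) (hdisj : Disjoint D U) (ha : a ≤ n + 2) (hb : b ≤ n + 2)
    (h1 : StrictBetween n D U a b v) (h2 : StrictBetween n D U b a v) : False := by
  have hv := h1.1
  have qa := pos_le hUD hdisj ha
  have qb := pos_le hUD hdisj hb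
  have qv := pos_le hUD hdisj hv
  rw [sb_iff hUD hdisj ha hb] at h1
  rw [sb_iff hUD hdisj hb ha] at h2
  unfold pdist at h1 h2
  split_ifs at h1 h2 <;> omega

lemma sb_total (hUD : D ∪ U = Finset.Icc 1 (n + 1)) (hdisj : Disjoint D U) (ha : a ≤ n + 2) (hb : b ≤ n + 2) (hv : v ≤ n + 2)
    (hab : a ≠ b) (hva : v ≠ a) (hvb : v ≠ b) :
    StrictBetween n D U a b v ∨ StrictBetween n D U b a v := by
  have qa := pos_le hUD hdisj ha
  have qb := pos_le hUD hdisj hb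
  have qv := pos_le hUD hdisj hv
  have nab := pos_ne hUD hdisj ha hb hab
  have nva := pos_ne hUD hdisj hv ha hva
  have nvb := pos_ne hUD hdisj hv hb hvb
  rw [sb_iff hUD hdisj ha hb, sb_iff hUD hdisj hb ha]
  unfold pdist
  split_ifs <;> omega

lemma sb_rotate (hUD : D ∪ U = Finset.Icc 1 (n + 1)) (hdisj : Disjoint D U) (ha : a ≤ n + 2) (hb : b ≤ n + 2)
    (h : StrictBetween n D U a b v) : StrictBetween n D U v a b := by
  have hv := h.1
  have qa := pos_le hUD hdisj ha
  have qb := pos_le hUD hdisj hb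
  have qv := pos_le hUD hdisj hv
  rw [sb_iff hUD hdisj ha hb] at h
  rw [sb_iff hUD hdisj hv ha]
  unfold pdist at h ⊢
  split_ifs at h ⊢ <;> omega

lemma sb_split (hUD : D ∪ U = Finset.Icc 1 (n + 1)) (hdisj : Disjoint D U) (ha : a ≤ n + 2) (hb : b ≤ n + 2) (hcc : c ≠ d)
    (h1 : StrictBetween n D U a b c) (h2 : StrictBetween n D U a b d) :
    StrictBetween n D U a c d ∨ StrictBetween n D U c b d := by
  have hc := h1.1
  have hd := h2.1
  have qa := pos_le hUD hdisj ha
  have qb := pos_le hUD hdisj hb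
  have qc := pos_le hUD hdisj hc
  have qd := pos_le hUD hdisj hd
  have ncd := pos_ne hUD hdisj hc hd hcc
  rw [sb_iff hUD hdisj ha hb] at h1 h2
  rw [sb_iff hUD hdisj ha hc, sb_iff hUD hdisj hc hb]
  unfold pdist at h1 h2 ⊢
  split_ifs at h1 h2 ⊢ <;> omega

lemma sb_cross_sym (hUD : D ∪ U = Finset.Icc 1 (n + 1)) (hdisj : Disjoint D U) (ha : a ≤ n + 2) (hb : b ≤ n + 2)
    (h1 : StrictBetween n D U a b c) (h2 : StrictBetween n D U b a d) :
    StrictBetween n D U c d b ∧ StrictBetween n D U d c a := by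
  have hc := h1.1
  have hd := h2.1
  have qa := pos_le hUD hdisj ha
  have qb := pos_le hUD hdisj hb
  have qc := pos_le hUD hdisj hc
  have qd := pos_le hUD hdisj hd
  rw [sb_iff hUD hdisj ha hb] at h1
  rw [sb_iff hUD hdisj hb ha] at h2
  rw [sb_iff hUD hdisj hc hd, sb_iff hUD hdisj hd hc]
  unfold pdist at h1 h2 ⊢
  split_ifs at h1 h2 ⊢ <;> omega

end Arith2
section Key

variable {n : ℕ} {D U : Finset ℕ} {a b v w x y : ℕ}

/-- Linearized cyclic coordinate: lower chain `0,D,n+2` keeps its value,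
upper chain `U` is reflected above. -/
def key (n : ℕ) (U : Finset ℕ) (x : ℕ) : ℕ := if x ∈ U then 2 * n + 4 - x else x

lemma key_low (hx : x ∉ U) : key n U x = x := if_neg hx

lemma key_up (hx : x ∈ U) : key n U x = 2 * n + 4 - x := if_pos hx

lemma key_low_le (hx : x ∉ U) (h : x ≤ n + 2) : key n U x ≤ n + 2 := by
  rw [key_low hx]; exact h

lemma key_up_bounds (hUD : D ∪ U = Finset.Icc 1 (n + 1)) (hx : x ∈ U) :
    n + 3 ≤ key n U x ∧ key n U x ≤ 2 * n + 3 := by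
  obtain ⟨h1, h2⟩ := mem_U_bounds hUD hx
  rw [key_up hx]; omega

lemma pos_low_mono (hUD : D ∪ U = Finset.Icc 1 (n + 1)) (hdisj : Disjoint D U)
    (hx : x ∉ U) (hy : y ∉ U) (hxy : x < y) (hy2 : y ≤ n + 2) :
    pos n D U x < pos n D U y := by
  rcases vert_cases hUD (le_trans (le_of_lt hxy) hy2) with h1 | h1 | h1 | h1
  · subst h1
    rw [pos_zero]
    rcases vert_cases hUD hy2 with h2 | h2 | h2 | h2
    · omega
    · subst h2; rw [pos_top]; omega
    · exact lt_of_lt_of_le Nat.zero_lt_one (pos_D_bounds hUD h2).1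
    · exact absurd h2 hy
  · omega
  · rcases vert_cases hUD hy2 with h2 | h2 | h2 | h2
    · omega
    · subst h2
      rw [pos_top]
      have := (pos_D_bounds hUD h1).2
      omega
    · exact pos_D_mono hUD h1 h2 hxy
    · exact absurd h2 hy
  · exact absurd h1 hx

lemma key_lt_iff (hUD : D ∪ U = Finset.Icc 1 (n + 1)) (hdisj : Disjoint D U)
    (hx : x ≤ n + 2) (hy : y ≤ n + 2) :
    pos n D U x < pos n D U y ↔ key n U x < key n U y := by
  have hc := cardDU hUD hdisj
  by_cases h1 : x ∈ U <;> by_cases h2 : y ∈ U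
  · -- both up
    obtain ⟨b1, b2⟩ := mem_U_bounds hUD h1
    obtain ⟨b3, b4⟩ := mem_U_bounds hUD h2
    rw [key_up h1, key_up h2]
    constructor
    · intro h
      rcases lt_trichotomy x y with hh | hh | hh
      · exact absurd (pos_U_anti hUD hdisj h1 h2 hh) (by omega)
      · rw [hh] at h; exact absurd h (lt_irrefl _)
      · omega
    · intro h
      have hyx : y < x := by omega
      exact pos_U_anti hUD hdisj h2 h1 hyx
  · rw [key_up h1, key_low h2]
    obtain ⟨u1, u2⟩ := mem_U_bounds hUD h1
    have p1 := (pos_U_bounds hUD hdisj h1).1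
    have p2 : pos n D U y ≤ D.card + 1 := by
      rcases vert_cases hUD hy with hh | hh | hh | hh
      · rw [hh, pos_zero]; omega
      · rw [hh, pos_top]
      · have := (pos_D_bounds hUD hh).2; omega
      · exact absurd hh h2
    constructor
    · intro h; omega
    · intro h; omega
  · rw [key_low h1, key_up h2]
    obtain ⟨u1, u2⟩ := mem_U_bounds hUD h2
    have p1 := (pos_U_bounds hUD hdisj h2).1
    have p2 : pos n D U x ≤ D.card + 1 := by
      rcases vert_cases hUD hx with hh | hh | hh | hh
      · rw [hh, pos_zero]; omega
      · rw [hh, pos_top]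
      · have := (pos_D_bounds hUD hh).2; omega
      · exact absurd hh h1
    constructor
    · intro h; omega
    · intro h; omega
  · rw [key_low h1, key_low h2]
    constructor
    · intro h
      rcases lt_trichotomy x y with hh | hh | hh
      · exact hh
      · rw [hh] at h; exact absurd h (lt_irrefl _)
      · exact absurd (pos_low_mono hUD hdisj h2 h1 hh hx) (by omega)
    · intro h
      exact pos_low_mono hUD hdisj h1 h2 h hy

lemma key_eq_iff (hUD : D ∪ U = Finset.Icc 1 (n + 1)) (hdisj : Disjoint D U)
    (hx : x ≤ n + 2) (hy : y ≤ n + 2) :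
    pos n D U x = pos n D U y ↔ key n U x = key n U y := by
  constructor
  · intro h
    rw [pos_inj hUD hdisj hx hy h]
  · intro h
    rcases lt_trichotomy (pos n D U x) (pos n D U y) with hh | hh | hh
    · rw [key_lt_iff hUD hdisj hx hy] at hh; omega
    · exact hh
    · rw [key_lt_iff hUD hdisj hy hx] at hh; omega

/-- Master characterization of `StrictBetween` via `key`. -/
lemma sb_key (hUD : D ∪ U = Finset.Icc 1 (n + 1)) (hdisj : Disjoint D U)
    (ha : a ≤ n + 2) (hb : b ≤ n + 2) :
    StrictBetween n D U a b v ↔ v ≤ n + 2 ∧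
      (if key n U a ≤ key n U b then key n U a < key n U v ∧ key n U v < key n U b
       else (key n U v < key n U b ∨ key n U a < key n U v)) := by
  constructor
  · rintro ⟨hv, h1, h2⟩
    refine ⟨hv, ?_⟩
    rw [relpos_eq hUD hdisj ha hv] at h1 h2
    rw [relpos_eq hUD hdisj ha hb] at h2
    have i1 := key_lt_iff hUD hdisj ha hb
    have i2 := key_lt_iff hUD hdisj ha hv
    have i3 := key_lt_iff hUD hdisj hv hb
    have e1 := key_eq_iff hUD hdisj ha hb
    have e2 := key_eq_iff hUD hdisj ha hv
    have e3 := key_eq_iff hUD hdisj hv hb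
    have qa := pos_le hUD hdisj ha
    have qb := pos_le hUD hdisj hb
    have qv := pos_le hUD hdisj hv
    unfold pdist at h1 h2
    split_ifs at h1 h2 ⊢ <;> omega
  · rintro ⟨hv, h⟩
    refine ⟨hv, ?_, ?_⟩ <;>
    · rw [relpos_eq hUD hdisj ha hv]
      try rw [relpos_eq hUD hdisj ha hb]
      have i1 := key_lt_iff hUD hdisj ha hb
      have i2 := key_lt_iff hUD hdisj ha hv
      have i3 := key_lt_iff hUD hdisj hv hb
      have e1 := key_eq_iff hUD hdisj ha hb
      have e2 := key_eq_iff hUD hdisj ha hv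
      have e3 := key_eq_iff hUD hdisj hv hb
      have qa := pos_le hUD hdisj ha
      have qb := pos_le hUD hdisj hb
      have qv := pos_le hUD hdisj hv
      unfold pdist
      split_ifs at h ⊢ <;> omega

end Key
section VLayer

variable {n : ℕ} {D U : Finset ℕ} {σ : Equiv.Perm ℕ} {a b v x y : ℕ} {i i' : ℕ}

lemma sigma_bounds (hUD : D ∪ U = Finset.Icc 1 (n + 1))
    (hσ : ∀ j ∈ Finset.Icc 1 (n + 1), σ j ∈ Finset.Icc 1 (n + 1))
    (hv : v ∈ D ∨ v ∈ U) : 1 ≤ σ v ∧ σ v ≤ n + 1 := by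
  have h1 : v ∈ Finset.Icc 1 (n + 1) := by
    rw [← hUD]; rcases hv with h | h
    · exact Finset.mem_union_left _ h
    · exact Finset.mem_union_right _ h
  have := hσ v h1
  rw [Finset.mem_Icc] at this; exact this

lemma mem_Vset_iff (hUD : D ∪ U = Finset.Icc 1 (n + 1)) (hdisj : Disjoint D U)
    (hσ : ∀ j ∈ Finset.Icc 1 (n + 1), σ j ∈ Finset.Icc 1 (n + 1)) :
    v ∈ Vset n D σ i ↔
      v = 0 ∨ v = n + 2 ∨ (v ∈ D ∧ i < σ v) ∨ (v ∈ U ∧ σ v ≤ i) := by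
  rw [Vset, Finset.mem_insert, Finset.mem_insert, Finset.mem_symmDiff]
  constructor
  · rintro (h | h | ⟨hD, hS⟩ | ⟨hS, hD⟩)
    · exact Or.inl h
    · exact Or.inr (Or.inl h)
    · refine Or.inr (Or.inr (Or.inl ⟨hD, ?_⟩))
      obtain ⟨s1, s2⟩ := sigma_bounds hUD hσ (Or.inl hD)
      obtain ⟨d1, d2⟩ := mem_D_bounds hUD hD
      rw [sigmaPre, Finset.mem_filter, Finset.mem_Icc, Finset.mem_Icc] at hS
      push_neg at hS
      have := hS ⟨d1, d2⟩ s1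
      omega
    · rw [sigmaPre, Finset.mem_filter, Finset.mem_Icc, Finset.mem_Icc] at hS
      obtain ⟨⟨v1, v2⟩, _, s2⟩ := hS
      rcases label_cases hUD v1 v2 with h | h
      · exact absurd h hD
      · exact Or.inr (Or.inr (Or.inr ⟨h, s2⟩))
  · rintro (h | h | ⟨hD, hi⟩ | ⟨hu, hi⟩)
    · exact Or.inl h
    · exact Or.inr (Or.inl h)
    · refine Or.inr (Or.inr (Or.inl ⟨hD, ?_⟩))
      rw [sigmaPre, Finset.mem_filter]
      rintro ⟨-, hs⟩
      rw [Finset.mem_Icc] at hs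
      omega
    · refine Or.inr (Or.inr (Or.inr ⟨?_, ?_⟩))
      · rw [sigmaPre, Finset.mem_filter, Finset.mem_Icc, Finset.mem_Icc]
        obtain ⟨u1, u2⟩ := mem_U_bounds hUD hu
        obtain ⟨s1, s2⟩ := sigma_bounds hUD hσ (Or.inr hu)
        exact ⟨⟨u1, u2⟩, s1, hi⟩
      · exact fun h => not_mem_U_of_D hdisj h hu

lemma zero_mem_Vset : 0 ∈ Vset n D σ i := Finset.mem_insert_self _ _

lemma top_mem_Vset : n + 2 ∈ Vset n D σ i :=
  Finset.mem_insert_of_mem (Finset.mem_insert_self _ _)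

lemma Vset_le (hUD : D ∪ U = Finset.Icc 1 (n + 1)) (hdisj : Disjoint D U)
    (hσ : ∀ j ∈ Finset.Icc 1 (n + 1), σ j ∈ Finset.Icc 1 (n + 1))
    (h : v ∈ Vset n D σ i) : v ≤ n + 2 := by
  rw [mem_Vset_iff hUD hdisj hσ] at h
  rcases h with h | h | ⟨h, -⟩ | ⟨h, -⟩
  · omega
  · omega
  · have := (mem_D_bounds hUD h).2; omega
  · have := (mem_U_bounds hUD h).2; omega

lemma D_mem_Vset_iff (hUD : D ∪ U = Finset.Icc 1 (n + 1)) (hdisj : Disjoint D U)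
    (hσ : ∀ j ∈ Finset.Icc 1 (n + 1), σ j ∈ Finset.Icc 1 (n + 1))
    (hv : v ∈ D) : v ∈ Vset n D σ i ↔ i < σ v := by
  obtain ⟨d1, d2⟩ := mem_D_bounds hUD hv
  rw [mem_Vset_iff hUD hdisj hσ]
  constructor
  · rintro (h | h | ⟨-, h⟩ | ⟨h, -⟩)
    · omega
    · omega
    · exact h
    · exact absurd h (not_mem_U_of_D hdisj hv)
  · intro h; exact Or.inr (Or.inr (Or.inl ⟨hv, h⟩))

lemma U_mem_Vset_iff (hUD : D ∪ U = Finset.Icc 1 (n + 1)) (hdisj : Disjoint D U)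
    (hσ : ∀ j ∈ Finset.Icc 1 (n + 1), σ j ∈ Finset.Icc 1 (n + 1))
    (hv : v ∈ U) : v ∈ Vset n D σ i ↔ σ v ≤ i := by
  obtain ⟨d1, d2⟩ := mem_U_bounds hUD hv
  rw [mem_Vset_iff hUD hdisj hσ]
  constructor
  · rintro (h | h | ⟨h, -⟩ | ⟨-, h⟩)
    · omega
    · omega
    · exact absurd hv (not_mem_U_of_D hdisj h)
    · exact h
  · intro h; exact Or.inr (Or.inr (Or.inr ⟨hv, h⟩))

/-- an element of `V i` which is a label is in `D` (still present) or `U` (added). -/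
lemma consec_mid_absent (hUD : D ∪ U = Finset.Icc 1 (n + 1)) (hdisj : Disjoint D U)
    (hσ : ∀ j ∈ Finset.Icc 1 (n + 1), σ j ∈ Finset.Icc 1 (n + 1))
    (h : ConsecIn (Vset n D σ i) (a, b)) (hc : a < v) (hc2 : v < b) :
    (v ∈ D → σ v ≤ i) ∧ (v ∈ U → i < σ v) := by
  have hv : v ∉ Vset n D σ i := fun hmem => h.2.2.2 v hmem ⟨hc, hc2⟩
  constructor
  · intro hD
    by_contra hh
    exact hv ((D_mem_Vset_iff hUD hdisj hσ hD).2 (by omega))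
  · intro hU
    by_contra hh
    exact hv ((U_mem_Vset_iff hUD hdisj hσ hU).2 (by omega))

/-- generic: next element in a finite set containing `n+2`. -/
lemma exists_next {V : Finset ℕ} (hV : n + 2 ∈ V) (ha : a ∈ V) (h2 : a < n + 2) :
    ∃ f, ConsecIn V (a, f) ∧ (∀ w ∈ V, a < w → f ≤ w) := by
  classical
  have hne : (V.filter (fun t => a < t)).Nonempty := ⟨n + 2, Finset.mem_filter.mpr ⟨hV, h2⟩⟩
  have hfm := (V.filter (fun t => a < t)).min'_mem hne
  rw [Finset.mem_filter] at hfm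
  refine ⟨(V.filter (fun t => a < t)).min' hne, ⟨ha, hfm.1, hfm.2, ?_⟩, ?_⟩
  · rintro c hc ⟨hc1, hc2⟩
    have hc3 : a < c := hc1
    have : (V.filter (fun t => a < t)).min' hne ≤ c :=
      Finset.min'_le (V.filter (fun t => a < t)) c (Finset.mem_filter.mpr ⟨hc, hc3⟩)
    omega
  · intro w hw hw2
    exact Finset.min'_le (V.filter (fun t => a < t)) w (Finset.mem_filter.mpr ⟨hw, hw2⟩)

lemma exists_prev {V : Finset ℕ} (hV : 0 ∈ V) (ha : a ∈ V) (h2 : 0 < a) :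
    ∃ e, ConsecIn V (e, a) ∧ (∀ w ∈ V, w < a → w ≤ e) := by
  classical
  have hne : (V.filter (fun t => t < a)).Nonempty := ⟨0, Finset.mem_filter.mpr ⟨hV, h2⟩⟩
  have hem := (V.filter (fun t => t < a)).max'_mem hne
  rw [Finset.mem_filter] at hem
  refine ⟨(V.filter (fun t => t < a)).max' hne, ⟨hem.1, ha, hem.2, ?_⟩, ?_⟩
  · rintro c hc ⟨hc1, hc2⟩
    have hc3 : c < a := hc2
    have : c ≤ (V.filter (fun t => t < a)).max' hne :=
      Finset.le_max' (V.filter (fun t => t < a)) c (Finset.mem_filter.mpr ⟨hc, hc3⟩)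
    omega
  · intro w hw hw2
    exact Finset.le_max' (V.filter (fun t => t < a)) w (Finset.mem_filter.mpr ⟨hw, hw2⟩)

lemma exists_span {V : Finset ℕ} (hV0 : 0 ∈ V) (hVt : n + 2 ∈ V) (hx : x ∉ V)
    (h1 : 0 < x) (h2 : x < n + 2) :
    ∃ e f, ConsecIn V (e, f) ∧ e < x ∧ x < f ∧
      (∀ w ∈ V, w < x → w ≤ e) ∧ (∀ w ∈ V, x < w → f ≤ w) := by
  classical
  have hne1 : (V.filter (fun t => t < x)).Nonempty := ⟨0, Finset.mem_filter.mpr ⟨hV0, h1⟩⟩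
  have hne2 : (V.filter (fun t => x < t)).Nonempty := ⟨n + 2, Finset.mem_filter.mpr ⟨hVt, h2⟩⟩
  have hem := (V.filter (fun t => t < x)).max'_mem hne1
  have hfm := (V.filter (fun t => x < t)).min'_mem hne2
  rw [Finset.mem_filter] at hem hfm
  refine ⟨(V.filter (fun t => t < x)).max' hne1, (V.filter (fun t => x < t)).min' hne2,
    ⟨hem.1, hfm.1, by omega, ?_⟩, hem.2, hfm.2, ?_, ?_⟩
  · rintro c hc ⟨hc1, hc2⟩
    rcases lt_trichotomy c x with hh | hh | hh
    · have : c ≤ (V.filter (fun t => t < x)).max' hne1 :=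
        Finset.le_max' (V.filter (fun t => t < x)) c (Finset.mem_filter.mpr ⟨hc, hh⟩)
      omega
    · subst hh; exact hx hc
    · have : (V.filter (fun t => x < t)).min' hne2 ≤ c :=
        Finset.min'_le (V.filter (fun t => x < t)) c (Finset.mem_filter.mpr ⟨hc, hh⟩)
      omega
  · intro w hw hw2
    exact Finset.le_max' (V.filter (fun t => t < x)) w (Finset.mem_filter.mpr ⟨hw, hw2⟩)
  · intro w hw hw2
    exact Finset.min'_le (V.filter (fun t => x < t)) w (Finset.mem_filter.mpr ⟨hw, hw2⟩)

/-- walk lemma: between two present labels of opposite kinds there is a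
consecutive pair of opposite kinds. -/
lemma exists_walk (hUD : D ∪ U = Finset.Icc 1 (n + 1)) (hdisj : Disjoint D U)
    (hσ : ∀ j ∈ Finset.Icc 1 (n + 1), σ j ∈ Finset.Icc 1 (n + 1)) :
    ∀ k x y, y - x ≤ k → x ∈ Vset n D σ i → y ∈ Vset n D σ i → x < y →
    ((x ∈ D ∧ y ∈ U) ∨ (x ∈ U ∧ y ∈ D)) →
    ∃ e f, ConsecIn (Vset n D σ i) (e, f) ∧ x ≤ e ∧ f ≤ y ∧
      ((e ∈ D ∧ f ∈ U) ∨ (e ∈ U ∧ f ∈ D)) := by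
  intro k
  induction k with
  | zero => intro x y h _ _ hxy _; omega
  | succ k ih =>
    intro x y hk hx hy hxy htype
    have hy2 : y ≤ n + 1 := by
      rcases htype with ⟨-, h⟩ | ⟨-, h⟩
      · exact (mem_U_bounds hUD h).2
      · exact (mem_D_bounds hUD h).2
    obtain ⟨f, hcons, hmin⟩ := exists_next (top_mem_Vset) hx (by omega)
    have hfy : f ≤ y := hmin y hy hxy
    have hfx : x < f := hcons.2.2.1
    have hfb : f ∈ D ∨ f ∈ U := by
      have h1 : 1 ≤ f := by
        rcases htype with ⟨h, -⟩ | ⟨h, -⟩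
        · have := (mem_D_bounds hUD h).1; omega
        · have := (mem_U_bounds hUD h).1; omega
      exact label_cases hUD h1 (by omega)
    rcases eq_or_lt_of_le hfy with hfy' | hfy'
    · subst hfy'
      exact ⟨x, f, hcons, le_refl _, le_refl _, htype⟩
    · -- f < y
      rcases htype with ⟨hxD, hyU⟩ | ⟨hxU, hyD⟩
      · rcases hfb with hfD | hfU
        · obtain ⟨e', f', hc, h1, h2, h3⟩ :=
            ih f y (by omega) hcons.2.1 hy hfy' (Or.inl ⟨hfD, hyU⟩)
          exact ⟨e', f', hc, by omega, h2, h3⟩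
        · exact ⟨x, f, hcons, le_refl _, by omega, Or.inl ⟨hxD, hfU⟩⟩
      · rcases hfb with hfD | hfU
        · exact ⟨x, f, hcons, le_refl _, by omega, Or.inr ⟨hxU, hfD⟩⟩
        · obtain ⟨e', f', hc, h1, h2, h3⟩ :=
            ih f y (by omega) hcons.2.1 hy hfy' (Or.inr ⟨hfU, hyD⟩)
          exact ⟨e', f', hc, by omega, h2, h3⟩

lemma mem_sigmaTri_iff {δ : ℕ × ℕ} :
    δ ∈ sigmaTri n D U σ ↔ IsInternalDiag n D U δ ∧
      ∃ i ≤ n + 1, ConsecIn (Vset n D σ i) δ := by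
  simp only [sigmaTri, Finset.mem_filter, Finset.mem_product, Finset.mem_range]
  constructor
  · rintro ⟨-, h1, i, hi, h2⟩
    exact ⟨h1, i, by omega, h2⟩
  · rintro ⟨h1, i, hi, h2⟩
    obtain ⟨hd1, hd2⟩ := h1.1
    exact ⟨⟨by omega, by omega⟩, h1, i, by omega, h2⟩

lemma edge_of_consec (hUD : D ∪ U = Finset.Icc 1 (n + 1)) (hdisj : Disjoint D U)
    (hσ : ∀ j ∈ Finset.Icc 1 (n + 1), σ j ∈ Finset.Icc 1 (n + 1))
    (h : ConsecIn (Vset n D σ i) (a, b)) (hi : i ≤ n + 1) :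
    EdgeOf n D U (sigmaTri n D U σ) a b := by
  by_cases hb : IsBoundaryEdge n D U (a, b)
  · exact Or.inr hb
  · left
    rw [mem_sigmaTri_iff]
    have hble : b ≤ n + 2 := Vset_le hUD hdisj hσ h.2.1
    exact ⟨⟨⟨h.2.2.1, hble⟩, hb⟩, i, hi, h⟩

end VLayer
section Extremes

variable {n : ℕ} {D U : Finset ℕ} {σ : Equiv.Perm ℕ} {a b v x y : ℕ} {i : ℕ}

lemma relpos_of_le (hUD : D ∪ U = Finset.Icc 1 (n + 1)) (hdisj : Disjoint D U)
    (ha : a ≤ n + 2) (hb : b ≤ n + 2) (h : pos n D U a ≤ pos n D U b) :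
    relpos n D U a b = pos n D U b - pos n D U a := by
  rw [relpos_eq hUD hdisj ha hb, pdist, if_pos h]

lemma relpos_of_gt (hUD : D ∪ U = Finset.Icc 1 (n + 1)) (hdisj : Disjoint D U)
    (ha : a ≤ n + 2) (hb : b ≤ n + 2) (h : pos n D U b < pos n D U a) :
    relpos n D U a b = pos n D U b + (n + 3) - pos n D U a := by
  rw [relpos_eq hUD hdisj ha hb, pdist, if_neg (by omega)]

lemma consec_V0_boundary (hUD : D ∪ U = Finset.Icc 1 (n + 1)) (hdisj : Disjoint D U)
    (hσ : ∀ j ∈ Finset.Icc 1 (n + 1), σ j ∈ Finset.Icc 1 (n + 1))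
    (h : ConsecIn (Vset n D σ 0) (a, b)) : IsBoundaryEdge n D U (a, b) := by
  have hmem : ∀ v ∈ Vset n D σ 0, v = 0 ∨ v = n + 2 ∨ v ∈ D := by
    intro v hv
    rw [mem_Vset_iff hUD hdisj hσ] at hv
    rcases hv with h1 | h1 | ⟨h1, -⟩ | ⟨h1, h2⟩
    · exact Or.inl h1
    · exact Or.inr (Or.inl h1)
    · exact Or.inr (Or.inr h1)
    · have := (sigma_bounds hUD hσ (Or.inr h1)).1; omega
  have ha := h.1
  have hb := h.2.1
  have hab := h.2.2.1
  have ha2 : a ≤ n + 2 := Vset_le hUD hdisj hσ ha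
  have hb2 : b ≤ n + 2 := Vset_le hUD hdisj hσ hb
  have hmid : ∀ c, a < c → c < b → c ∉ D := by
    intro c hc1 hc2 hcD
    refine h.2.2.2 c ?_ ⟨hc1, hc2⟩
    rw [mem_Vset_iff hUD hdisj hσ]
    have := (sigma_bounds hUD hσ (Or.inl hcD)).1
    exact Or.inr (Or.inr (Or.inl ⟨hcD, by omega⟩))
  -- compute pos b = pos a + 1
  have hsucc : pos n D U b = pos n D U a + 1 := by
    rcases hmem a ha with h1 | h1 | h1
    · subst h1
      rw [pos_zero]
      rcases hmem b hb with h2 | h2 | h2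
      · omega
      · subst h2
        rw [pos_top]
        have hD : D = ∅ := by
          apply Finset.eq_empty_of_forall_notMem
          intro d hd
          obtain ⟨d1, d2⟩ := mem_D_bounds hUD hd
          exact hmid d (by omega) (by omega) hd
        rw [hD]; simp
      · rw [pos_D hUD h2]
        have : D.filter (fun d => d < b) = ∅ := by
          apply Finset.eq_empty_of_forall_notMem
          intro d hd
          rw [Finset.mem_filter] at hd
          have := (mem_D_bounds hUD hd.1).1
          exact hmid d (by omega) hd.2 hd.1
        rw [this]; simp
    · omega
    · rcases hmem b hb with h2 | h2 | h2
      · omega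
      · subst h2
        rw [pos_top, pos_D hUD h1]
        have : D = insert a (D.filter (fun d => d < a)) := by
          ext d
          rw [Finset.mem_insert, Finset.mem_filter]
          constructor
          · intro hd
            rcases lt_trichotomy d a with hh | hh | hh
            · exact Or.inr ⟨hd, hh⟩
            · exact Or.inl hh
            · exfalso
              have := (mem_D_bounds hUD hd).2
              exact hmid d hh (by omega) hd
          · rintro (rfl | ⟨hd, -⟩)
            · exact h1
            · exact hd
        have h3 : D.card = (insert a (D.filter (fun d => d < a))).card := by
          rw [← this]
        have h4 : (insert a (D.filter (fun d => d < a))).card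
            = (D.filter (fun d => d < a)).card + 1 :=
          Finset.card_insert_of_notMem (by
            rw [Finset.mem_filter]; rintro ⟨-, hh⟩; omega)
        omega
      · rw [pos_D hUD h1, pos_D hUD h2]
        have : D.filter (fun d => d < b) = insert a (D.filter (fun d => d < a)) := by
          ext d
          rw [Finset.mem_insert, Finset.mem_filter, Finset.mem_filter]
          constructor
          · rintro ⟨hd, hdb⟩
            rcases lt_trichotomy d a with hh | hh | hh
            · exact Or.inr ⟨hd, hh⟩
            · exact Or.inl hh
            · exact absurd hd (hmid d hh hdb)
          · rintro (rfl | ⟨hd, hh⟩)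
            · exact ⟨h1, hab⟩
            · exact ⟨hd, by omega⟩
        rw [this, Finset.card_insert_of_notMem (by
          rw [Finset.mem_filter]; rintro ⟨-, hh⟩; omega)]
        omega
  refine ⟨⟨hab, hb2⟩, Or.inl ?_⟩
  rw [relpos_of_le hUD hdisj ha2 hb2 (by omega)]
  omega

lemma consec_Vlast_boundary (hUD : D ∪ U = Finset.Icc 1 (n + 1)) (hdisj : Disjoint D U)
    (hσ : ∀ j ∈ Finset.Icc 1 (n + 1), σ j ∈ Finset.Icc 1 (n + 1))
    (h : ConsecIn (Vset n D σ (n + 1)) (a, b)) : IsBoundaryEdge n D U (a, b) := by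
  have hc := cardDU hUD hdisj
  have hmem : ∀ v ∈ Vset n D σ (n + 1), v = 0 ∨ v = n + 2 ∨ v ∈ U := by
    intro v hv
    rw [mem_Vset_iff hUD hdisj hσ] at hv
    rcases hv with h1 | h1 | ⟨h1, h2⟩ | ⟨h1, -⟩
    · exact Or.inl h1
    · exact Or.inr (Or.inl h1)
    · have := (sigma_bounds hUD hσ (Or.inl h1)).2; omega
    · exact Or.inr (Or.inr h1)
  have ha := h.1
  have hb := h.2.1
  have hab := h.2.2.1
  have ha2 : a ≤ n + 2 := Vset_le hUD hdisj hσ ha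
  have hb2 : b ≤ n + 2 := Vset_le hUD hdisj hσ hb
  have hmid : ∀ c, a < c → c < b → c ∉ U := by
    intro c hc1 hc2 hcU
    refine h.2.2.2 c ?_ ⟨hc1, hc2⟩
    rw [mem_Vset_iff hUD hdisj hσ]
    have := (sigma_bounds hUD hσ (Or.inr hcU)).2
    exact Or.inr (Or.inr (Or.inr ⟨hcU, by omega⟩))
  -- compute: cyclic successor of b is a
  have hsucc : pos n D U a + (n + 2 - pos n D U b) = (if a = 0 then 0 else pos n D U b + 1)
      + (n + 2 - pos n D U b) := by
    rcases hmem a ha with h1 | h1 | h1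
    · subst h1
      rw [if_pos rfl, pos_zero]
    · omega
    · have hU1 := mem_U_bounds hUD h1
      rw [if_neg (by omega)]
      rcases hmem b hb with h2 | h2 | h2
      · omega
      · subst h2
        rw [pos_top, pos_U hUD hdisj h1]
        have : U.filter (fun u => a < u) = ∅ := by
          apply Finset.eq_empty_of_forall_notMem
          intro u hu
          rw [Finset.mem_filter] at hu
          have := (mem_U_bounds hUD hu.1).2
          exact hmid u hu.2 (by omega) hu.1
        rw [this]; simp
      · rw [pos_U hUD hdisj h1, pos_U hUD hdisj h2]
        have : U.filter (fun u => a < u) = insert b (U.filter (fun u => b < u)) := by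
          ext u
          rw [Finset.mem_insert, Finset.mem_filter, Finset.mem_filter]
          constructor
          · rintro ⟨hu, hau⟩
            rcases lt_trichotomy u b with hh | hh | hh
            · exact absurd hu (hmid u hau hh)
            · exact Or.inl hh
            · exact Or.inr ⟨hu, hh⟩
          · rintro (rfl | ⟨hu, hh⟩)
            · exact ⟨h2, hab⟩
            · exact ⟨hu, by omega⟩
        rw [this, Finset.card_insert_of_notMem (by
          rw [Finset.mem_filter]; rintro ⟨-, hh⟩; omega)]
        omega
  -- also: pos b = n + 2 when a = 0
  have hbtop : a = 0 → pos n D U b = n + 2 := by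
    intro h0
    subst h0
    rcases hmem b hb with h2 | h2 | h2
    · omega
    · subst h2
      rw [pos_top]
      have hU : U = ∅ := by
        apply Finset.eq_empty_of_forall_notMem
        intro u hu
        obtain ⟨u1, u2⟩ := mem_U_bounds hUD hu
        exact hmid u (by omega) (by omega) hu
      rw [hU] at hc
      simp at hc
      omega
    · rw [pos_U hUD hdisj h2]
      have : U.filter (fun u => b < u) = U.filter (fun u => u ≠ b) := by
        ext u
        rw [Finset.mem_filter, Finset.mem_filter]
        constructor
        · rintro ⟨hu, hh⟩; exact ⟨hu, by omega⟩
        · rintro ⟨hu, hh⟩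
          refine ⟨hu, ?_⟩
          rcases lt_trichotomy u b with h3 | h3 | h3
          · have := (mem_U_bounds hUD hu).1
            exact absurd hu (hmid u (by omega) h3)
          · omega
          · exact h3
      rw [this, Finset.filter_ne' U b, Finset.card_erase_of_mem h2]
      have hU1 : 1 ≤ U.card := Finset.card_pos.2 ⟨b, h2⟩
      omega
  refine ⟨⟨hab, hb2⟩, Or.inr ?_⟩
  have hpb := pos_le hUD hdisj hb2
  have hpa := pos_le hUD hdisj ha2
  by_cases h0 : a = 0
  · have := hbtop h0
    rw [relpos_of_gt hUD hdisj hb2 ha2 (by rw [h0, pos_zero]; omega)]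
    rw [h0, pos_zero]
    omega
  · rw [if_neg h0] at hsucc
    rw [relpos_of_le hUD hdisj hb2 ha2 (by omega)]
    omega
end Extremes
section NonCross

variable {n : ℕ} {D U : Finset ℕ} {σ : Equiv.Perm ℕ}

lemma nc_core (hUD : D ∪ U = Finset.Icc 1 (n + 1)) (hdisj : Disjoint D U)
    (hσ : ∀ j ∈ Finset.Icc 1 (n + 1), σ j ∈ Finset.Icc 1 (n + 1))
    {i i' a b c d p p' : ℕ} (hii : i ≤ i')
    (h1 : ConsecIn (Vset n D σ i) (a, b)) (h2 : ConsecIn (Vset n D σ i') (c, d))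
    (hac : a ≠ c) (had : a ≠ d) (hbc : b ≠ c) (hbd : b ≠ d)
    (hor : (p = c ∧ p' = d) ∨ (p = d ∧ p' = c))
    (hp1 : StrictBetween n D U a b p) (hp2 : StrictBetween n D U b a p') : False := by
  have hab : a < b := h1.2.2.1
  have hcd : c < d := h2.2.2.1
  have haV := h1.1
  have hbV := h1.2.1
  have hcV := h2.1
  have hdV := h2.2.1
  have ha2 : a ≤ n + 2 := Vset_le hUD hdisj hσ haV
  have hb2 : b ≤ n + 2 := Vset_le hUD hdisj hσ hbV
  have hpV : p ∈ Vset n D σ i' := by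
    rcases hor with ⟨rfl, -⟩ | ⟨rfl, -⟩ <;> assumption
  have hp'V : p' ∈ Vset n D σ i' := by
    rcases hor with ⟨-, rfl⟩ | ⟨-, rfl⟩ <;> assumption
  have hpa : p ≠ a := by rcases hor with ⟨rfl, -⟩ | ⟨rfl, -⟩ <;> omega
  have hpb : p ≠ b := by rcases hor with ⟨rfl, -⟩ | ⟨rfl, -⟩ <;> omega
  have hp'a : p' ≠ a := by rcases hor with ⟨-, rfl⟩ | ⟨-, rfl⟩ <;> omega
  have hp'b : p' ≠ b := by rcases hor with ⟨-, rfl⟩ | ⟨-, rfl⟩ <;> omega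
  have hmidc : ∀ w, w ∈ Vset n D σ i' → ((p' < w ∧ w < p) ∨ (p < w ∧ w < p')) → False := by
    intro w hw hww
    rcases hor with ⟨rfl, rfl⟩ | ⟨rfl, rfl⟩ <;> rcases hww with ⟨h3, h4⟩ | ⟨h3, h4⟩
    · omega
    · exact h2.2.2.2 w hw ⟨h3, h4⟩
    · exact h2.2.2.2 w hw ⟨h3, h4⟩
    · omega
  have hPD : ∀ w, w ∈ D → w ∈ Vset n D σ i' → a < w → w < b → False := by
    intro w hw hwV h3 h4
    have hwi : w ∈ Vset n D σ i := by
      rw [D_mem_Vset_iff hUD hdisj hσ hw] at hwV ⊢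
      omega
    exact h1.2.2.2 w hwi ⟨h3, h4⟩
  have hPU : ∀ w, w ∈ U → w ∈ Vset n D σ i → w ∈ Vset n D σ i' := by
    intro w hw hwV
    rw [U_mem_Vset_iff hUD hdisj hσ hw] at hwV ⊢
    omega
  obtain ⟨hpn, hp1⟩ := (sb_key hUD hdisj ha2 hb2).1 hp1
  obtain ⟨hp'n, hp2⟩ := (sb_key hUD hdisj hb2 ha2).1 hp2
  -- p and p' are labels if strictly inside (0, n+2)
  have hlab : ∀ w, 0 < w → w ≤ n + 1 → w ∉ U → w ∈ D := by
    intro w w1 w2 wU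
    rcases label_cases hUD w1 w2 with h | h
    · exact h
    · exact absurd h wU
  by_cases hA : a ∈ U <;> by_cases hB : b ∈ U
  · -- case UU
    obtain ⟨ua1, ua2⟩ := mem_U_bounds hUD hA
    obtain ⟨ub1, ub2⟩ := mem_U_bounds hUD hB
    rw [key_up hA, key_up hB] at hp1 hp2
    -- hp2 : p' ∈ U and a < p' < b
    have hp'U : p' ∈ U := by
      by_contra hh
      rw [key_low hh, if_pos (by omega)] at hp2
      omega
    obtain ⟨up1, up2⟩ := mem_U_bounds hUD hp'U
    rw [key_up hp'U, if_pos (by omega)] at hp2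
    have hp'ab : a < p' ∧ p' < b := by omega
    have hp'Vi : p' ∈ Vset n D σ i' := hp'V
    rcases lt_trichotomy p a with hh | hh | hh
    · exact hmidc a (hPU a hA haV) (Or.inr ⟨hh, hp'ab.1⟩)
    · exact hpa hh
    · rcases lt_trichotomy p b with h3 | h3 | h3
      · -- a < p < b
        by_cases hP : p ∈ U
        · obtain ⟨w1, w2⟩ := mem_U_bounds hUD hP
          rw [key_up hP, if_neg (by omega)] at hp1
          omega
        · exact hPD p (hlab p (by omega) (by omega) hP) hpV hh h3
      · exact hpb h3
      · exact hmidc b (hPU b hB hbV) (Or.inl ⟨hp'ab.2, h3⟩)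
  · -- case UL : a ∈ U, b ∉ U
    obtain ⟨ua1, ua2⟩ := mem_U_bounds hUD hA
    rw [key_up hA, key_low hB] at hp1 hp2
    -- from hp1 : p < a (after eliminating a < p < b)
    have hpval : p < a ∨ (a < p ∧ p < b ∧ p ∉ U) := by
      by_cases hP : p ∈ U
      · obtain ⟨w1, w2⟩ := mem_U_bounds hUD hP
        rw [key_up hP, if_neg (by omega)] at hp1
        omega
      · rw [key_low hP, if_neg (by omega)] at hp1
        have : p < b := by omega
        rcases lt_trichotomy p a with hh | hh | hh
        · exact Or.inl hh
        · exact absurd hh hpa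
        · exact Or.inr ⟨hh, this, hP⟩
    have hp'val : a < p' := by
      by_cases hP' : p' ∈ U
      · obtain ⟨w1, w2⟩ := mem_U_bounds hUD hP'
        rw [key_up hP', if_pos (by omega)] at hp2
        omega
      · rw [key_low hP', if_pos (by omega)] at hp2
        omega
    rcases hpval with hh | ⟨h3, h4, h5⟩
    · exact hmidc a (hPU a hA haV) (Or.inr ⟨hh, hp'val⟩)
    · exact hPD p (hlab p (by omega) (by omega) h5) hpV h3 h4
  · -- case LU : a ∉ U, b ∈ U
    obtain ⟨ub1, ub2⟩ := mem_U_bounds hUD hB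
    rw [key_low hA, key_up hB] at hp1 hp2
    have hpval : b < p ∨ (a < p ∧ p < b ∧ p ∉ U) := by
      by_cases hP : p ∈ U
      · obtain ⟨w1, w2⟩ := mem_U_bounds hUD hP
        rw [key_up hP, if_pos (by omega)] at hp1
        omega
      · rw [key_low hP, if_pos (by omega)] at hp1
        rcases lt_trichotomy p b with hh | hh | hh
        · exact Or.inr ⟨by omega, hh, hP⟩
        · exact absurd hh hpb
        · exact Or.inl hh
    have hp'val : p' < b := by
      by_cases hP' : p' ∈ U
      · obtain ⟨w1, w2⟩ := mem_U_bounds hUD hP'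
        rw [key_up hP', if_neg (by omega)] at hp2
        omega
      · rw [key_low hP', if_neg (by omega)] at hp2
        omega
    rcases hpval with hh | ⟨h3, h4, h5⟩
    · exact hmidc b (hPU b hB hbV) (Or.inl ⟨hp'val, hh⟩)
    · exact hPD p (hlab p (by omega) (by omega) h5) hpV h3 h4
  · -- case LL
    rw [key_low hA, key_low hB, if_pos (by omega)] at hp1
    have hP : p ∉ U := by
      intro hP
      obtain ⟨w1, w2⟩ := mem_U_bounds hUD hP
      rw [key_up hP] at hp1
      omega
    rw [key_low hP] at hp1
    exact hPD p (hlab p (by omega) (by omega) hP) hpV (by omega) (by omega)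

/-- the diagonals of `sigmaTri` are pairwise non-crossing. -/
lemma sigmaTri_noncross (hUD : D ∪ U = Finset.Icc 1 (n + 1)) (hdisj : Disjoint D U)
    (hσ : ∀ j ∈ Finset.Icc 1 (n + 1), σ j ∈ Finset.Icc 1 (n + 1)) :
    ∀ δ ∈ sigmaTri n D U σ, ∀ δ' ∈ sigmaTri n D U σ, ¬ Cross n D U δ δ' := by
  rintro ⟨a, b⟩ hδ ⟨c, d⟩ hδ' hcross
  obtain ⟨hint, i, hi, hcons⟩ := mem_sigmaTri_iff.1 hδ
  obtain ⟨hint', i', hi', hcons'⟩ := mem_sigmaTri_iff.1 hδ'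
  obtain ⟨-, -, hac, had, hbc, hbd, hsb⟩ := hcross
  simp only at hac had hbc hbd hsb
  have hab' : a < b := hint.1.1
  have hb2 : b ≤ n + 2 := hint.1.2
  have ha2 : a ≤ n + 2 := by omega
  have hcd' : c < d := hint'.1.1
  have hd2 : d ≤ n + 2 := hint'.1.2
  have hc2 : c ≤ n + 2 := by omega
  rcases le_or_gt i i' with hii | hii
  · rcases hsb with ⟨hs1, hs2⟩ | ⟨hs1, hs2⟩
    · exact nc_core hUD hdisj hσ hii hcons hcons' hac had hbc hbd
        (Or.inl ⟨rfl, rfl⟩) hs1 hs2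
    · exact nc_core hUD hdisj hσ hii hcons hcons' hac had hbc hbd
        (Or.inr ⟨rfl, rfl⟩) hs1 hs2
  · rcases hsb with ⟨hs1, hs2⟩ | ⟨hs1, hs2⟩
    · obtain ⟨hs1', hs2'⟩ := sb_cross_sym hUD hdisj ha2 hb2 hs1 hs2
      exact nc_core hUD hdisj hσ (le_of_lt hii) hcons' hcons
        (Ne.symm hac) (Ne.symm hbc) (Ne.symm had) (Ne.symm hbd)
        (Or.inr ⟨rfl, rfl⟩) hs1' hs2'
    · obtain ⟨hs1', hs2'⟩ := sb_cross_sym hUD hdisj ha2 hb2 hs1 hs2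
      exact nc_core hUD hdisj hσ (le_of_lt hii) hcons' hcons
        (Ne.symm hac) (Ne.symm hbc) (Ne.symm had) (Ne.symm hbd)
        (Or.inl ⟨rfl, rfl⟩) hs2' hs1'

end NonCross
section Max

variable {n : ℕ} {D U : Finset ℕ} {σ : Equiv.Perm ℕ} {a b e f v x y : ℕ}

lemma relpos_self : relpos n D U a a = 0 := by
  simp [relpos, Nat.add_sub_cancel_left, Nat.mod_self]

lemma sb_ab_ne (h : StrictBetween n D U a b v) : a ≠ b := by
  rintro rfl
  have h0 : relpos n D U a a = 0 := relpos_self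
  have := h.2.1
  have := h.2.2
  omega

lemma internal_of_sb (hef : e < f) (hf2 : f ≤ n + 2)
    (h1 : StrictBetween n D U e f x) (h2 : StrictBetween n D U f e y) :
    IsInternalDiag n D U (e, f) := by
  refine ⟨⟨hef, hf2⟩, ?_⟩
  rintro ⟨-, hb | hb⟩
  · simp only at hb
    have := h1.2.1; have := h1.2.2; omega
  · simp only at hb
    have := h2.2.1; have := h2.2.2; omega

lemma mk_crossing (hUD : D ∪ U = Finset.Icc 1 (n + 1)) (hdisj : Disjoint D U)
    (hσ : ∀ j ∈ Finset.Icc 1 (n + 1), σ j ∈ Finset.Icc 1 (n + 1)) {i : ℕ}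
    (hi : i ≤ n + 1) (hcons : ConsecIn (Vset n D σ i) (e, f))
    (ha2 : a ≤ n + 2) (hb2 : b ≤ n + 2)
    (hsides : (StrictBetween n D U a b e ∧ StrictBetween n D U b a f) ∨
              (StrictBetween n D U a b f ∧ StrictBetween n D U b a e)) :
    ∃ δ' ∈ sigmaTri n D U σ, Cross n D U (a, b) δ' := by
  have hef : e < f := hcons.2.2.1
  have hf2 : f ≤ n + 2 := Vset_le hUD hdisj hσ hcons.2.1
  rcases hsides with ⟨h1, h2⟩ | ⟨h1, h2⟩
  · obtain ⟨hs1, hs2⟩ := sb_cross_sym hUD hdisj ha2 hb2 h1 h2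
    refine ⟨(e, f), mem_sigmaTri_iff.2 ⟨internal_of_sb hef hf2 hs1 hs2, i, hi, hcons⟩, ?_⟩
    exact ⟨sb_ab_ne h1, by omega, (sb_ne_left h1).symm, (sb_ne_right h2).symm,
      (sb_ne_right h1).symm, (sb_ne_left h2).symm, Or.inl ⟨h1, h2⟩⟩
  · obtain ⟨hs1, hs2⟩ := sb_cross_sym hUD hdisj ha2 hb2 h1 h2
    refine ⟨(e, f), mem_sigmaTri_iff.2 ⟨internal_of_sb hef hf2 hs2 hs1, i, hi, hcons⟩, ?_⟩
    exact ⟨sb_ab_ne h1, by omega, (sb_ne_right h2).symm, (sb_ne_left h1).symm,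
      (sb_ne_left h2).symm, (sb_ne_right h1).symm, Or.inr ⟨h1, h2⟩⟩

lemma key_cases (hUD : D ∪ U = Finset.Icc 1 (n + 1)) (hx2 : x ≤ n + 2) :
    (x ∈ U ∧ key n U x = 2 * n + 4 - x ∧ 1 ≤ x ∧ x ≤ n + 1) ∨ (x ∉ U ∧ key n U x = x) := by
  by_cases hx : x ∈ U
  · obtain ⟨h1, h2⟩ := mem_U_bounds hUD hx
    exact Or.inl ⟨hx, key_up hx, h1, h2⟩
  · exact Or.inr ⟨hx, key_low hx⟩

lemma not_sb_gt_low (hUD : D ∪ U = Finset.Icc 1 (n + 1)) (hdisj : Disjoint D U)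
    (he2 : e ≤ n + 2) (hf2 : f ≤ n + 2) (hfU : f ∉ U) (hef : e < f) (hfv : f < v)
    (hv2 : v ≤ n + 2) : ¬ StrictBetween n D U e f v := by
  intro h
  obtain ⟨-, h⟩ := (sb_key hUD hdisj he2 hf2).1 h
  rcases key_cases (U := U) hUD he2 with ⟨hm1, hk1, hc1, hd1⟩ | ⟨hm1, hk1⟩ <;>
    rcases key_cases (U := U) hUD hf2 with ⟨hm2, hk2, hc2, hd2⟩ | ⟨hm2, hk2⟩ <;>
      rcases key_cases (U := U) hUD hv2 with ⟨hm3, hk3, hc3, hd3⟩ | ⟨hm3, hk3⟩ <;>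
        rw [hk1, hk2, hk3] at h <;>
          first
          | exact hfU hm2
          | (split_ifs at h <;> omega)

lemma not_sb_lt_low (hUD : D ∪ U = Finset.Icc 1 (n + 1)) (hdisj : Disjoint D U)
    (he2 : e ≤ n + 2) (hf2 : f ≤ n + 2) (heU : e ∉ U) (hef : e < f) (hve : v < e)
    (hv2 : v ≤ n + 2) : ¬ StrictBetween n D U e f v := by
  intro h
  obtain ⟨-, h⟩ := (sb_key hUD hdisj he2 hf2).1 h
  rcases key_cases (U := U) hUD he2 with ⟨hm1, hk1, hc1, hd1⟩ | ⟨hm1, hk1⟩ <;>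
    rcases key_cases (U := U) hUD hf2 with ⟨hm2, hk2, hc2, hd2⟩ | ⟨hm2, hk2⟩ <;>
      rcases key_cases (U := U) hUD hv2 with ⟨hm3, hk3, hc3, hd3⟩ | ⟨hm3, hk3⟩ <;>
        rw [hk1, hk2, hk3] at h <;>
          first
          | exact heU hm1
          | (split_ifs at h <;> omega)

lemma not_sb_gt_up (hUD : D ∪ U = Finset.Icc 1 (n + 1)) (hdisj : Disjoint D U)
    (he2 : e ≤ n + 2) (hf2 : f ≤ n + 2) (hfU : f ∈ U) (hef : e < f) (hfv : f < v)
    (hv2 : v ≤ n + 2) : ¬ StrictBetween n D U f e v := by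
  intro h
  obtain ⟨-, h⟩ := (sb_key hUD hdisj hf2 he2).1 h
  rcases key_cases (U := U) hUD he2 with ⟨hm1, hk1, hc1, hd1⟩ | ⟨hm1, hk1⟩ <;>
    rcases key_cases (U := U) hUD hf2 with ⟨hm2, hk2, hc2, hd2⟩ | ⟨hm2, hk2⟩ <;>
      rcases key_cases (U := U) hUD hv2 with ⟨hm3, hk3, hc3, hd3⟩ | ⟨hm3, hk3⟩ <;>
        rw [hk1, hk2, hk3] at h <;>
          first
          | exact (by assumption : f ∉ U) hfU
          | (split_ifs at h <;> omega)

lemma not_sb_lt_up (hUD : D ∪ U = Finset.Icc 1 (n + 1)) (hdisj : Disjoint D U)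
    (he2 : e ≤ n + 2) (hf2 : f ≤ n + 2) (heU : e ∈ U) (hef : e < f) (hve : v < e)
    (hv2 : v ≤ n + 2) : ¬ StrictBetween n D U f e v := by
  intro h
  obtain ⟨-, h⟩ := (sb_key hUD hdisj hf2 he2).1 h
  rcases key_cases (U := U) hUD he2 with ⟨hm1, hk1, hc1, hd1⟩ | ⟨hm1, hk1⟩ <;>
    rcases key_cases (U := U) hUD hf2 with ⟨hm2, hk2, hc2, hd2⟩ | ⟨hm2, hk2⟩ <;>
      rcases key_cases (U := U) hUD hv2 with ⟨hm3, hk3, hc3, hd3⟩ | ⟨hm3, hk3⟩ <;>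
        rw [hk1, hk2, hk3] at h <;>
          first
          | exact (by assumption : e ∉ U) heU
          | (split_ifs at h <;> omega)

lemma sb_D_between (hUD : D ∪ U = Finset.Icc 1 (n + 1)) (hdisj : Disjoint D U)
    (hvD : v ∈ D) (h1 : a < v) (h2 : v < b) (hb2 : b ≤ n + 2) :
    StrictBetween n D U a b v := by
  obtain ⟨hv1, hv2⟩ := mem_D_bounds hUD hvD
  have hvU : v ∉ U := not_mem_U_of_D hdisj hvD
  rw [sb_key hUD hdisj (by omega) hb2]
  refine ⟨by omega, ?_⟩
  rcases key_cases (U := U) hUD (show a ≤ n + 2 by omega) with ⟨hm1, hk1, hc1, hd1⟩ | ⟨hm1, hk1⟩ <;>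
    rcases key_cases (U := U) hUD hb2 with ⟨hm2, hk2, hc2, hd2⟩ | ⟨hm2, hk2⟩ <;>
      rw [hk1, hk2, key_low hvU] <;> split_ifs <;> omega

lemma sb_U_between (hUD : D ∪ U = Finset.Icc 1 (n + 1)) (hdisj : Disjoint D U)
    (hvU : v ∈ U) (h1 : a < v) (h2 : v < b) (hb2 : b ≤ n + 2) :
    StrictBetween n D U b a v := by
  obtain ⟨hv1, hv2⟩ := mem_U_bounds hUD hvU
  rw [sb_key hUD hdisj hb2 (show a ≤ n + 2 by omega)]
  refine ⟨by omega, ?_⟩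
  rcases key_cases (U := U) hUD (show a ≤ n + 2 by omega) with ⟨hm1, hk1, hc1, hd1⟩ | ⟨hm1, hk1⟩ <;>
    rcases key_cases (U := U) hUD hb2 with ⟨hm2, hk2, hc2, hd2⟩ | ⟨hm2, hk2⟩ <;>
      rw [hk1, hk2, key_up hvU] <;> split_ifs <;> omega

lemma C1 (hUD : D ∪ U = Finset.Icc 1 (n + 1)) (hdisj : Disjoint D U)
    (hσ : ∀ j ∈ Finset.Icc 1 (n + 1), σ j ∈ Finset.Icc 1 (n + 1)) {i : ℕ}
    (hi : i ≤ n + 1) (hb2 : b ≤ n + 2) (hxD : x ∈ D) (hyU : y ∈ U)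
    (hax : a < x) (hxb : x < b) (hay : a < y) (hyb : y < b)
    (hxV : x ∈ Vset n D σ i) (hyV : y ∈ Vset n D σ i) :
    ∃ δ' ∈ sigmaTri n D U σ, Cross n D U (a, b) δ' := by
  obtain ⟨x1, x2⟩ := mem_D_bounds hUD hxD
  obtain ⟨y1, y2⟩ := mem_U_bounds hUD hyU
  have hxy : x ≠ y := fun h => not_mem_U_of_D hdisj hxD (h ▸ hyU)
  rcases lt_or_gt_of_ne hxy with h | h
  · obtain ⟨e, f, hcons, h1, h2, h3⟩ :=
      exists_walk hUD hdisj hσ (y - x) x y le_rfl hxV hyV h (Or.inl ⟨hxD, hyU⟩)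
    have hef : e < f := hcons.2.2.1
    apply mk_crossing hUD hdisj hσ hi hcons (by omega) hb2
    rcases h3 with ⟨heD, hfU⟩ | ⟨heU, hfD⟩
    · exact Or.inl ⟨sb_D_between hUD hdisj heD (by omega) (by omega) hb2,
        sb_U_between hUD hdisj hfU (by omega) (by omega) hb2⟩
    · exact Or.inr ⟨sb_D_between hUD hdisj hfD (by omega) (by omega) hb2,
        sb_U_between hUD hdisj heU (by omega) (by omega) hb2⟩
  · obtain ⟨e, f, hcons, h1, h2, h3⟩ :=
      exists_walk hUD hdisj hσ (x - y) y x le_rfl hyV hxV h (Or.inr ⟨hyU, hxD⟩)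
    have hef : e < f := hcons.2.2.1
    apply mk_crossing hUD hdisj hσ hi hcons (by omega) hb2
    rcases h3 with ⟨heD, hfU⟩ | ⟨heU, hfD⟩
    · exact Or.inl ⟨sb_D_between hUD hdisj heD (by omega) (by omega) hb2,
        sb_U_between hUD hdisj hfU (by omega) (by omega) hb2⟩
    · exact Or.inr ⟨sb_D_between hUD hdisj hfD (by omega) (by omega) hb2,
        sb_U_between hUD hdisj heU (by omega) (by omega) hb2⟩

lemma C2a (hUD : D ∪ U = Finset.Icc 1 (n + 1)) (hdisj : Disjoint D U)
    (hσ : ∀ j ∈ Finset.Icc 1 (n + 1), σ j ∈ Finset.Icc 1 (n + 1))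
    (hb2 : b ≤ n + 2) (hxD : x ∈ D) (haD : a ∈ D)
    (hax : a < x) (hxb : x < b) (hs : σ a < σ x) :
    ∃ δ' ∈ sigmaTri n D U σ, Cross n D U (a, b) δ' := by
  obtain ⟨sa1, sa2⟩ := sigma_bounds hUD hσ (Or.inl haD)
  obtain ⟨sx1, sx2⟩ := sigma_bounds hUD hσ (Or.inl hxD)
  obtain ⟨a1, a2⟩ := mem_D_bounds hUD haD
  obtain ⟨x1, x2⟩ := mem_D_bounds hUD hxD
  have haV : a ∉ Vset n D σ (σ a) := by
    rw [D_mem_Vset_iff hUD hdisj hσ haD]; omega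
  have hxV : x ∈ Vset n D σ (σ a) := by
    rw [D_mem_Vset_iff hUD hdisj hσ hxD]; omega
  obtain ⟨e, f, hcons, he, hf, hmax, hmin⟩ :=
    exists_span zero_mem_Vset top_mem_Vset haV (by omega) (by omega)
  have hfx : f ≤ x := hmin x hxV hax
  have hef : e < f := hcons.2.2.1
  have hf2 : f ≤ n + 2 := Vset_le hUD hdisj hσ hcons.2.1
  rcases label_cases hUD (show 1 ≤ f by omega) (by omega) with hfD | hfU
  · have h1 : StrictBetween n D U e f a := sb_D_between hUD hdisj haD he hf hf2
    have h2 : StrictBetween n D U f e b := by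
      rcases sb_total hUD hdisj (show e ≤ n + 2 by omega) hf2 hb2
        (by omega) (by omega) (by omega) with hh | hh
      · exact absurd hh (not_sb_gt_low hUD hdisj (by omega) hf2
          (not_mem_U_of_D hdisj hfD) hef (by omega) hb2)
      · exact hh
    obtain ⟨hs1, hs2⟩ := sb_cross_sym hUD hdisj (show e ≤ n + 2 by omega) hf2 h1 h2
    exact mk_crossing hUD hdisj hσ (by omega) hcons (by omega) hb2 (Or.inr ⟨hs1, hs2⟩)
  · exact C1 hUD hdisj hσ (show σ a ≤ n + 1 by omega) hb2 hxD hfU hax hxb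
      (by omega) (by omega) hxV hcons.2.1

lemma C2b (hUD : D ∪ U = Finset.Icc 1 (n + 1)) (hdisj : Disjoint D U)
    (hσ : ∀ j ∈ Finset.Icc 1 (n + 1), σ j ∈ Finset.Icc 1 (n + 1))
    (hxD : x ∈ D) (hbD : b ∈ D)
    (hax : a < x) (hxb : x < b) (hs : σ b < σ x) :
    ∃ δ' ∈ sigmaTri n D U σ, Cross n D U (a, b) δ' := by
  obtain ⟨sb1, sb2⟩ := sigma_bounds hUD hσ (Or.inl hbD)
  obtain ⟨sx1, sx2⟩ := sigma_bounds hUD hσ (Or.inl hxD)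
  obtain ⟨b1, b2⟩ := mem_D_bounds hUD hbD
  obtain ⟨x1, x2⟩ := mem_D_bounds hUD hxD
  have hbV : b ∉ Vset n D σ (σ b) := by
    rw [D_mem_Vset_iff hUD hdisj hσ hbD]; omega
  have hxV : x ∈ Vset n D σ (σ b) := by
    rw [D_mem_Vset_iff hUD hdisj hσ hxD]; omega
  obtain ⟨e, f, hcons, he, hf, hmax, hmin⟩ :=
    exists_span zero_mem_Vset top_mem_Vset hbV (by omega) (by omega)
  have hxe : x ≤ e := hmax x hxV hxb
  have hef : e < f := hcons.2.2.1
  have hf2 : f ≤ n + 2 := Vset_le hUD hdisj hσ hcons.2.1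
  rcases label_cases hUD (show 1 ≤ e by omega) (by omega) with heD | heU
  · have h1 : StrictBetween n D U e f b := sb_D_between hUD hdisj hbD he hf hf2
    have h2 : StrictBetween n D U f e a := by
      rcases sb_total hUD hdisj (show e ≤ n + 2 by omega) hf2 (show a ≤ n + 2 by omega)
        (by omega) (by omega) (by omega) with hh | hh
      · exact absurd hh (not_sb_lt_low hUD hdisj (by omega) hf2
          (not_mem_U_of_D hdisj heD) hef (by omega) (by omega))
      · exact hh
    obtain ⟨hs1, hs2⟩ := sb_cross_sym hUD hdisj (show e ≤ n + 2 by omega) hf2 h1 h2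
    exact mk_crossing hUD hdisj hσ (by omega) hcons (by omega) (by omega) (Or.inl ⟨hs2, hs1⟩)
  · exact C1 hUD hdisj hσ (show σ b ≤ n + 1 by omega) (by omega) hxD heU hax hxb
      (by omega) (by omega) hxV hcons.1

lemma C3a (hUD : D ∪ U = Finset.Icc 1 (n + 1)) (hdisj : Disjoint D U)
    (hσ : ∀ j ∈ Finset.Icc 1 (n + 1), σ j ∈ Finset.Icc 1 (n + 1))
    (hb2 : b ≤ n + 2) (haU : a ∈ U) (hyU : y ∈ U)
    (hay : a < y) (hyb : y < b) (hs : σ y < σ a) :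
    ∃ δ' ∈ sigmaTri n D U σ, Cross n D U (a, b) δ' := by
  obtain ⟨sa1, sa2⟩ := sigma_bounds hUD hσ (Or.inr haU)
  obtain ⟨sy1, sy2⟩ := sigma_bounds hUD hσ (Or.inr hyU)
  obtain ⟨a1, a2⟩ := mem_U_bounds hUD haU
  obtain ⟨y1, y2⟩ := mem_U_bounds hUD hyU
  have haV : a ∉ Vset n D σ (σ y) := by
    rw [U_mem_Vset_iff hUD hdisj hσ haU]; omega
  have hyV : y ∈ Vset n D σ (σ y) := by
    rw [U_mem_Vset_iff hUD hdisj hσ hyU]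
  obtain ⟨e, f, hcons, he, hf, hmax, hmin⟩ :=
    exists_span zero_mem_Vset top_mem_Vset haV (by omega) (by omega)
  have hfy : f ≤ y := hmin y hyV hay
  have hef : e < f := hcons.2.2.1
  have hf2 : f ≤ n + 2 := Vset_le hUD hdisj hσ hcons.2.1
  rcases label_cases hUD (show 1 ≤ f by omega) (by omega) with hfD | hfU
  · -- f ∈ D, present, inside (a,b): C1 with (f, y)
    exact C1 hUD hdisj hσ (show σ y ≤ n + 1 by omega) hb2 hfD hyU (by omega) (by omega)
      hay hyb hcons.2.1 hyV
  · have h2 : StrictBetween n D U f e a := sb_U_between hUD hdisj haU he hf hf2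
    have h1 : StrictBetween n D U e f b := by
      rcases sb_total hUD hdisj (show e ≤ n + 2 by omega) hf2 hb2
        (by omega) (by omega) (by omega) with hh | hh
      · exact hh
      · exact absurd hh (not_sb_gt_up hUD hdisj (by omega) hf2 hfU hef (by omega) hb2)
    obtain ⟨hs1, hs2⟩ := sb_cross_sym hUD hdisj (show e ≤ n + 2 by omega) hf2 h1 h2
    exact mk_crossing hUD hdisj hσ (by omega) hcons (by omega) hb2 (Or.inl ⟨hs2, hs1⟩)

lemma C3b (hUD : D ∪ U = Finset.Icc 1 (n + 1)) (hdisj : Disjoint D U)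
    (hσ : ∀ j ∈ Finset.Icc 1 (n + 1), σ j ∈ Finset.Icc 1 (n + 1))
    (hbU : b ∈ U) (hyU : y ∈ U)
    (hay : a < y) (hyb : y < b) (hs : σ y < σ b) :
    ∃ δ' ∈ sigmaTri n D U σ, Cross n D U (a, b) δ' := by
  obtain ⟨sb1, sb2⟩ := sigma_bounds hUD hσ (Or.inr hbU)
  obtain ⟨sy1, sy2⟩ := sigma_bounds hUD hσ (Or.inr hyU)
  obtain ⟨b1, b2⟩ := mem_U_bounds hUD hbU
  obtain ⟨y1, y2⟩ := mem_U_bounds hUD hyU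
  have hbV : b ∉ Vset n D σ (σ y) := by
    rw [U_mem_Vset_iff hUD hdisj hσ hbU]; omega
  have hyV : y ∈ Vset n D σ (σ y) := by
    rw [U_mem_Vset_iff hUD hdisj hσ hyU]
  obtain ⟨e, f, hcons, he, hf, hmax, hmin⟩ :=
    exists_span zero_mem_Vset top_mem_Vset hbV (by omega) (by omega)
  have hye : y ≤ e := hmax y hyV hyb
  have hef : e < f := hcons.2.2.1
  have hf2 : f ≤ n + 2 := Vset_le hUD hdisj hσ hcons.2.1
  rcases label_cases hUD (show 1 ≤ e by omega) (by omega) with heD | heU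
  · exact C1 hUD hdisj hσ (show σ y ≤ n + 1 by omega) (by omega) heD hyU (by omega)
      (by omega) hay hyb hcons.1 hyV
  · have h2 : StrictBetween n D U f e b := sb_U_between hUD hdisj hbU he hf hf2
    have h1 : StrictBetween n D U e f a := by
      rcases sb_total hUD hdisj (show e ≤ n + 2 by omega) hf2 (show a ≤ n + 2 by omega)
        (by omega) (by omega) (by omega) with hh | hh
      · exact hh
      · exact absurd hh (not_sb_lt_up hUD hdisj (by omega) hf2 heU hef (by omega) (by omega))
    obtain ⟨hs1, hs2⟩ := sb_cross_sym hUD hdisj (show e ≤ n + 2 by omega) hf2 h1 h2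
    exact mk_crossing hUD hdisj hσ (by omega) hcons (by omega) (by omega) (Or.inr ⟨hs1, hs2⟩)

lemma C4i (hUD : D ∪ U = Finset.Icc 1 (n + 1)) (hdisj : Disjoint D U)
    (hσ : ∀ j ∈ Finset.Icc 1 (n + 1), σ j ∈ Finset.Icc 1 (n + 1))
    (haD : a ∈ D) (hbU : b ∈ U) (hab : a < b) (hs : σ a < σ b) :
    ∃ δ' ∈ sigmaTri n D U σ, Cross n D U (a, b) δ' := by
  obtain ⟨sa1, sa2⟩ := sigma_bounds hUD hσ (Or.inl haD)
  obtain ⟨sb1, sb2⟩ := sigma_bounds hUD hσ (Or.inr hbU)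
  obtain ⟨a1, a2⟩ := mem_D_bounds hUD haD
  obtain ⟨b1, b2⟩ := mem_U_bounds hUD hbU
  have haV : a ∉ Vset n D σ (σ a) := by
    rw [D_mem_Vset_iff hUD hdisj hσ haD]; omega
  have hbV : b ∉ Vset n D σ (σ a) := by
    rw [U_mem_Vset_iff hUD hdisj hσ hbU]; omega
  obtain ⟨e, f, hcons, he, hf, hmax, hmin⟩ :=
    exists_span zero_mem_Vset top_mem_Vset haV (by omega) (by omega)
  have hef : e < f := hcons.2.2.1
  have hf2 : f ≤ n + 2 := Vset_le hUD hdisj hσ hcons.2.1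
  rcases lt_trichotomy f b with hh | hh | hh
  · rcases label_cases hUD (show 1 ≤ f by omega) (by omega) with hfD | hfU
    · have h1 : StrictBetween n D U e f a := sb_D_between hUD hdisj haD he hf hf2
      have h2 : StrictBetween n D U f e b := by
        rcases sb_total hUD hdisj (show e ≤ n + 2 by omega) hf2 (show b ≤ n + 2 by omega)
          (by omega) (by omega) (by omega) with hh2 | hh2
        · exact absurd hh2 (not_sb_gt_low hUD hdisj (by omega) hf2
            (not_mem_U_of_D hdisj hfD) hef hh (by omega))
        · exact hh2
      obtain ⟨hs1, hs2⟩ := sb_cross_sym hUD hdisj (show e ≤ n + 2 by omega) hf2 h1 h2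
      exact mk_crossing hUD hdisj hσ (by omega) hcons (by omega) (by omega) (Or.inr ⟨hs1, hs2⟩)
    · -- f ∈ U inside (a,b), with σ f ≤ σ a < σ b : C3b
      have hsf : σ f ≤ σ a := by
        have := (U_mem_Vset_iff hUD hdisj hσ hfU).1 hcons.2.1
        omega
      exact C3b hUD hdisj hσ hbU hfU (by omega) hh (by omega)
  · exfalso; rw [hh] at hcons; exact hbV hcons.2.1
  · have h1 : StrictBetween n D U e f a := sb_D_between hUD hdisj haD he hf hf2
    have h2 : StrictBetween n D U f e b := sb_U_between hUD hdisj hbU (by omega) hh hf2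
    obtain ⟨hs1, hs2⟩ := sb_cross_sym hUD hdisj (show e ≤ n + 2 by omega) hf2 h1 h2
    exact mk_crossing hUD hdisj hσ (by omega) hcons (by omega) (by omega) (Or.inr ⟨hs1, hs2⟩)

lemma C4ii (hUD : D ∪ U = Finset.Icc 1 (n + 1)) (hdisj : Disjoint D U)
    (hσ : ∀ j ∈ Finset.Icc 1 (n + 1), σ j ∈ Finset.Icc 1 (n + 1))
    (haU : a ∈ U) (hbD : b ∈ D) (hab : a < b) (hs : σ b < σ a) :
    ∃ δ' ∈ sigmaTri n D U σ, Cross n D U (a, b) δ' := by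
  obtain ⟨sa1, sa2⟩ := sigma_bounds hUD hσ (Or.inr haU)
  obtain ⟨sb1, sb2⟩ := sigma_bounds hUD hσ (Or.inl hbD)
  obtain ⟨a1, a2⟩ := mem_U_bounds hUD haU
  obtain ⟨b1, b2⟩ := mem_D_bounds hUD hbD
  have hbV : b ∉ Vset n D σ (σ b) := by
    rw [D_mem_Vset_iff hUD hdisj hσ hbD]; omega
  have haV : a ∉ Vset n D σ (σ b) := by
    rw [U_mem_Vset_iff hUD hdisj hσ haU]; omega
  obtain ⟨e, f, hcons, he, hf, hmax, hmin⟩ :=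
    exists_span zero_mem_Vset top_mem_Vset hbV (by omega) (by omega)
  have hef : e < f := hcons.2.2.1
  have hf2 : f ≤ n + 2 := Vset_le hUD hdisj hσ hcons.2.1
  rcases lt_trichotomy a e with hh | hh | hh
  · rcases label_cases hUD (show 1 ≤ e by omega) (by omega) with heD | heU
    · have h1 : StrictBetween n D U e f b := sb_D_between hUD hdisj hbD he hf hf2
      have h2 : StrictBetween n D U f e a := by
        rcases sb_total hUD hdisj (show e ≤ n + 2 by omega) hf2 (show a ≤ n + 2 by omega)
          (by omega) (by omega) (by omega) with hh2 | hh2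
        · exact absurd hh2 (not_sb_lt_low hUD hdisj (by omega) hf2
            (not_mem_U_of_D hdisj heD) hef hh (by omega))
        · exact hh2
      obtain ⟨hs1, hs2⟩ := sb_cross_sym hUD hdisj (show e ≤ n + 2 by omega) hf2 h1 h2
      exact mk_crossing hUD hdisj hσ (by omega) hcons (by omega) (by omega) (Or.inl ⟨hs2, hs1⟩)
    · have hse : σ e ≤ σ b := by
        have := (U_mem_Vset_iff hUD hdisj hσ heU).1 hcons.1
        omega
      exact C3a hUD hdisj hσ (by omega) haU heU hh (by omega) (by omega)
  · exfalso; rw [← hh] at hcons; exact haV hcons.1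
  · have h1 : StrictBetween n D U e f b := sb_D_between hUD hdisj hbD he hf hf2
    have h2 : StrictBetween n D U f e a := sb_U_between hUD hdisj haU hh (by omega) hf2
    obtain ⟨hs1, hs2⟩ := sb_cross_sym hUD hdisj (show e ≤ n + 2 by omega) hf2 h1 h2
    exact mk_crossing hUD hdisj hσ (by omega) hcons (by omega) (by omega) (Or.inl ⟨hs2, hs1⟩)

theorem sigmaTri_max (hUD : D ∪ U = Finset.Icc 1 (n + 1)) (hdisj : Disjoint D U)
    (hσ : ∀ j ∈ Finset.Icc 1 (n + 1), σ j ∈ Finset.Icc 1 (n + 1)) :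
    ∀ δ, IsInternalDiag n D U δ → δ ∉ sigmaTri n D U σ →
      ∃ δ' ∈ sigmaTri n D U σ, Cross n D U δ δ' := by
  rintro ⟨a, b⟩ hint hnot
  have hab : a < b := hint.1.1
  have hb2 : b ≤ n + 2 := hint.1.2
  classical
  set S : Finset ℕ := (D.filter (fun c => a < c ∧ c < b)) ∪
    (U.filter (fun c => c = a ∨ c = b)) with hS
  have hSle : ∀ c ∈ S, σ c ≤ n + 1 := by
    intro c hc
    rw [hS, Finset.mem_union, Finset.mem_filter, Finset.mem_filter] at hc
    rcases hc with ⟨hc, -⟩ | ⟨hc, -⟩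
    · exact (sigma_bounds hUD hσ (Or.inl hc)).2
    · exact (sigma_bounds hUD hσ (Or.inr hc)).2
  have hi0 : S.sup σ ≤ n + 1 := Finset.sup_le hSle
  by_cases hall : ∀ y, ((y ∈ U ∧ a < y ∧ y < b) ∨ (y ∈ D ∧ (y = a ∨ y = b))) →
      S.sup σ < σ y
  · exfalso
    apply hnot
    rw [mem_sigmaTri_iff]
    refine ⟨hint, S.sup σ, hi0, ?_, ?_, hab, ?_⟩
    · -- a ∈ V
      rcases vert_cases hUD (show a ≤ n + 2 by omega) with h | h | h | h
      · rw [h]; exact zero_mem_Vset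
      · omega
      · rw [D_mem_Vset_iff hUD hdisj hσ h]
        exact hall a (Or.inr ⟨h, Or.inl rfl⟩)
      · rw [U_mem_Vset_iff hUD hdisj hσ h]
        apply Finset.le_sup
        rw [hS, Finset.mem_union, Finset.mem_filter]
        exact Or.inr (by rw [Finset.mem_filter]; exact ⟨h, Or.inl rfl⟩)
    · -- b ∈ V
      rcases vert_cases hUD hb2 with h | h | h | h
      · omega
      · rw [h]; exact top_mem_Vset
      · rw [D_mem_Vset_iff hUD hdisj hσ h]
        exact hall b (Or.inr ⟨h, Or.inr rfl⟩)
      · rw [U_mem_Vset_iff hUD hdisj hσ h]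
        apply Finset.le_sup
        rw [hS, Finset.mem_union]
        exact Or.inr (by rw [Finset.mem_filter]; exact ⟨h, Or.inr rfl⟩)
    · -- middles
      rintro c hc ⟨h3, h4⟩
      rcases label_cases hUD (show 1 ≤ c by omega) (show c ≤ n + 1 by omega) with h | h
      · rw [D_mem_Vset_iff hUD hdisj hσ h] at hc
        have : σ c ≤ S.sup σ := Finset.le_sup (by
          rw [hS, Finset.mem_union, Finset.mem_filter]
          exact Or.inl ⟨h, h3, h4⟩)
        omega
      · rw [U_mem_Vset_iff hUD hdisj hσ h] at hc
        have := hall c (Or.inl ⟨h, h3, h4⟩)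
        omega
  · push_neg at hall
    obtain ⟨y, hy, hyle⟩ := hall
    have hy1 : 1 ≤ σ y := by
      rcases hy with ⟨h, -⟩ | ⟨h, -⟩
      · exact (sigma_bounds hUD hσ (Or.inr h)).1
      · exact (sigma_bounds hUD hσ (Or.inl h)).1
    have hSne : S.Nonempty := by
      rcases Finset.eq_empty_or_nonempty S with hemp | hne
      · exfalso
        rw [hemp, Finset.sup_empty] at hyle
        simp only [Nat.bot_eq_zero, Nat.le_zero] at hyle
        omega
      · exact hne
    obtain ⟨x, hxS, hx⟩ := Finset.exists_mem_eq_sup S hSne (⇑σ)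
    rw [hS, Finset.mem_union, Finset.mem_filter, Finset.mem_filter] at hxS
    have hxy : x ≠ y := by
      rcases hxS with ⟨hxD, hx1, hx2⟩ | ⟨hxU, hx1⟩ <;> rcases hy with ⟨hyU, hy1', hy2'⟩ | ⟨hyD, hy1'⟩
      · exact fun h => not_mem_U_of_D hdisj hxD (h ▸ hyU)
      · rintro rfl; rcases hy1' with rfl | rfl <;> omega
      · rintro rfl; rcases hx1 with rfl | rfl <;> omega
      · exact fun h => not_mem_U_of_D hdisj hyD (h ▸ hxU)
    have hsxy : σ y < σ x := by
      have h1 : σ y ≤ σ x := by rw [hx] at hyle; exact hyle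
      have h2 : σ x ≠ σ y := fun h => hxy (σ.injective h)
      omega
    rcases hxS with ⟨hxD, hx1, hx2⟩ | ⟨hxU, hx1⟩ <;>
      rcases hy with ⟨hyU, hy1', hy2'⟩ | ⟨hyD, hy1'⟩
    · -- C1
      have hyV : y ∈ Vset n D σ (σ y) := by
        rw [U_mem_Vset_iff hUD hdisj hσ hyU]
      have hxV : x ∈ Vset n D σ (σ y) := by
        rw [D_mem_Vset_iff hUD hdisj hσ hxD]; omega
      exact C1 hUD hdisj hσ (show σ y ≤ n + 1 by
        have := (sigma_bounds hUD hσ (Or.inr hyU)).2; omega) hb2 hxD hyU hx1 hx2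
        hy1' hy2' hxV hyV
    · rcases hy1' with rfl | rfl
      · exact C2a hUD hdisj hσ hb2 hxD hyD hx1 hx2 hsxy
      · exact C2b hUD hdisj hσ hxD hyD hx1 hx2 hsxy
    · rcases hx1 with rfl | rfl
      · exact C3a hUD hdisj hσ hb2 hxU hyU hy1' hy2' hsxy
      · exact C3b hUD hdisj hσ hxU hyU hy1' hy2' hsxy
    · rcases hx1 with rfl | rfl <;> rcases hy1' with rfl | rfl
      · omega
      · exact C4ii hUD hdisj hσ hxU hyD hab hsxy
      · exact C4i hUD hdisj hσ hyD hxU hab hsxy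
      · omega

end Max
section Uniq

variable {n : ℕ} {D U : Finset ℕ} {σ : Equiv.Perm ℕ} {a b c c' e f u v w x y : ℕ}

lemma sb_gt_up (hUD : D ∪ U = Finset.Icc 1 (n + 1)) (hdisj : Disjoint D U)
    (hbU : b ∈ U) (hab : a < b) (hbv : b < v) (hv2 : v ≤ n + 2) :
    StrictBetween n D U a b v := by
  obtain ⟨b1, b2⟩ := mem_U_bounds hUD hbU
  rw [sb_key hUD hdisj (by omega) (by omega)]
  refine ⟨hv2, ?_⟩
  rcases key_cases (U := U) hUD (show a ≤ n + 2 by omega) with ⟨hm1, hk1, hc1, hd1⟩ | ⟨hm1, hk1⟩ <;>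
    rcases key_cases (U := U) hUD hv2 with ⟨hm3, hk3, hc3, hd3⟩ | ⟨hm3, hk3⟩ <;>
      rw [hk1, hk3, key_up hbU] <;> split_ifs <;> omega

lemma sb_lt_up (hUD : D ∪ U = Finset.Icc 1 (n + 1)) (hdisj : Disjoint D U)
    (haU : a ∈ U) (hab : a < b) (hva : v < a) (hb2 : b ≤ n + 2) :
    StrictBetween n D U a b v := by
  obtain ⟨a1, a2⟩ := mem_U_bounds hUD haU
  rw [sb_key hUD hdisj (by omega) hb2]
  refine ⟨by omega, ?_⟩
  rcases key_cases (U := U) hUD hb2 with ⟨hm2, hk2, hc2, hd2⟩ | ⟨hm2, hk2⟩ <;>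
    rcases key_cases (U := U) hUD (show v ≤ n + 2 by omega) with ⟨hm3, hk3, hc3, hd3⟩ | ⟨hm3, hk3⟩ <;>
      rw [hk2, hk3, key_up haU] <;> split_ifs <;> omega

lemma no_cross_boundary {p q : ℕ × ℕ} (hb : IsBoundaryEdge n D U p) :
    ¬ Cross n D U p q := by
  rintro ⟨-, -, -, -, -, -, ⟨h1, h2⟩ | ⟨h1, h2⟩⟩ <;>
  · obtain ⟨-, hr | hr⟩ := hb
    · have := h1.2.1; have := h1.2.2; omega
    · have := h2.2.1; have := h2.2.2; omega

lemma cross_symm (hUD : D ∪ U = Finset.Icc 1 (n + 1)) (hdisj : Disjoint D U)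
    {p q : ℕ × ℕ} (hp1 : p.1 ≤ n + 2) (hp2 : p.2 ≤ n + 2)
    (h : Cross n D U p q) : Cross n D U q p := by
  obtain ⟨h1, h2, h3, h4, h5, h6, hh⟩ := h
  refine ⟨h2, h1, h3.symm, h5.symm, h4.symm, h6.symm, ?_⟩
  rcases hh with ⟨hs1, hs2⟩ | ⟨hs1, hs2⟩
  · obtain ⟨g1, g2⟩ := sb_cross_sym hUD hdisj hp1 hp2 hs1 hs2
    exact Or.inr ⟨g1, g2⟩
  · obtain ⟨g1, g2⟩ := sb_cross_sym hUD hdisj hp1 hp2 hs1 hs2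
    exact Or.inl ⟨g2, g1⟩

lemma edge_nocross (hUD : D ∪ U = Finset.Icc 1 (n + 1)) (hdisj : Disjoint D U)
    (hσ : ∀ j ∈ Finset.Icc 1 (n + 1), σ j ∈ Finset.Icc 1 (n + 1))
    {p q : ℕ × ℕ}
    (hp : p ∈ sigmaTri n D U σ ∨ IsBoundaryEdge n D U p)
    (hq : q ∈ sigmaTri n D U σ ∨ IsBoundaryEdge n D U q) :
    ¬ Cross n D U p q := by
  rcases hp with hp | hp
  · rcases hq with hq | hq
    · exact sigmaTri_noncross hUD hdisj hσ p hp q hq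
    · intro hc
      have hint := (mem_sigmaTri_iff.1 hp).1
      have h1 : p.1 ≤ n + 2 := by have := hint.1.1; have := hint.1.2; omega
      exact no_cross_boundary hq (cross_symm hUD hdisj h1 hint.1.2 hc)
  · exact no_cross_boundary hp

/-- unordered edge of `T` or boundary. -/
def UE (n : ℕ) (D U : Finset ℕ) (T : Finset (ℕ × ℕ)) (x y : ℕ) : Prop :=
  if x < y then EdgeOf n D U T x y else EdgeOf n D U T y x

lemma ue_comm {T : Finset (ℕ × ℕ)} (h : UE n D U T x y) (hxy : x ≠ y) : UE n D U T y x := by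
  rw [UE] at h ⊢
  rcases lt_or_gt_of_ne hxy with hh | hh
  · rw [if_neg (by omega)]
    rwa [if_pos hh] at h
  · rw [if_pos hh]
    rwa [if_neg (by omega)] at h

lemma edgeof_status (hUD : D ∪ U = Finset.Icc 1 (n + 1)) (hdisj : Disjoint D U)
    (hσ : ∀ j ∈ Finset.Icc 1 (n + 1), σ j ∈ Finset.Icc 1 (n + 1))
    (h : EdgeOf n D U (sigmaTri n D U σ) x y) :
    (x, y) ∈ sigmaTri n D U σ ∨ IsBoundaryEdge n D U (x, y) := h

/-- no chord of the triangulation (or boundary) separates `w` from `w'` if both triples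
are joined by edges. -/
lemma no_sep (hUD : D ∪ U = Finset.Icc 1 (n + 1)) (hdisj : Disjoint D U)
    (hσ : ∀ j ∈ Finset.Icc 1 (n + 1), σ j ∈ Finset.Icc 1 (n + 1))
    (hx : x ≤ n + 2) (hy : y ≤ n + 2)
    (h : StrictBetween n D U x y w) (h' : StrictBetween n D U y x w')
    (hE : UE n D U (sigmaTri n D U σ) x y) (hE' : UE n D U (sigmaTri n D U σ) w w') :
    False := by
  have hxy : x ≠ y := sb_ab_ne h
  have hwx : w ≠ x := sb_ne_left h
  have hwy : w ≠ y := sb_ne_right h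
  have hw'y : w' ≠ y := sb_ne_left h'
  have hw'x : w' ≠ x := sb_ne_right h'
  have hww' : w ≠ w' := by
    rintro rfl
    exact sb_asymm hUD hdisj hx hy h h'
  have hcross : ∀ (P Q : ℕ × ℕ), P ∈ sigmaTri n D U σ ∨ IsBoundaryEdge n D U P →
      Q ∈ sigmaTri n D U σ ∨ IsBoundaryEdge n D U Q → Cross n D U P Q → False := by
    intro P Q h1 h2 h3
    exact edge_nocross hUD hdisj hσ h1 h2 h3
  rw [UE] at hE hE'
  rcases lt_or_gt_of_ne hxy with hh | hh <;> rcases lt_or_gt_of_ne hww' with gg | gg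
  · rw [if_pos hh] at hE
    rw [if_pos gg] at hE'
    exact hcross (x, y) (w, w') hE hE'
      ⟨by omega, by omega, Ne.symm hwx, Ne.symm hw'x, Ne.symm hwy, Ne.symm hw'y,
        Or.inl ⟨h, h'⟩⟩
  · rw [if_pos hh] at hE
    rw [if_neg (by omega)] at hE'
    exact hcross (x, y) (w', w) hE hE'
      ⟨by omega, by omega, Ne.symm hw'x, Ne.symm hwx, Ne.symm hw'y, Ne.symm hwy,
        Or.inr ⟨h, h'⟩⟩
  · rw [if_neg (by omega)] at hE
    rw [if_pos gg] at hE'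
    exact hcross (y, x) (w, w') hE hE'
      ⟨by omega, by omega, Ne.symm hwy, Ne.symm hw'y, Ne.symm hwx, Ne.symm hw'x,
        Or.inr ⟨h', h⟩⟩
  · rw [if_neg (by omega)] at hE
    rw [if_neg (by omega)] at hE'
    exact hcross (y, x) (w', w) hE hE'
      ⟨by omega, by omega, Ne.symm hw'y, Ne.symm hwy, Ne.symm hw'x, Ne.symm hwx,
        Or.inl ⟨h', h⟩⟩

lemma uniq_core (hUD : D ∪ U = Finset.Icc 1 (n + 1)) (hdisj : Disjoint D U)
    (hσ : ∀ j ∈ Finset.Icc 1 (n + 1), σ j ∈ Finset.Icc 1 (n + 1))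
    (hu : u ≤ n + 2) (hv : v ≤ n + 2)
    (h1 : StrictBetween n D U u v c) (h1' : StrictBetween n D U u v c')
    (e1 : UE n D U (sigmaTri n D U σ) u c) (e2 : UE n D U (sigmaTri n D U σ) c v)
    (e1' : UE n D U (sigmaTri n D U σ) u c') (e2' : UE n D U (sigmaTri n D U σ) c' v) :
    c = c' := by
  by_contra hne
  have hc2 : c ≤ n + 2 := h1.1
  have hc'2 : c' ≤ n + 2 := h1'.1
  rcases sb_split hUD hdisj hu hv hne h1 h1' with hs | hs
  · -- c' ∈ arc(u → c); v ∈ arc(c → u)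
    have hva : StrictBetween n D U c u v := sb_rotate hUD hdisj hu hv h1
    exact no_sep hUD hdisj hσ hu hc2 hs hva e1 e2'
  · -- c' ∈ arc(c → v); u ∈ arc(v → c)
    have hub : StrictBetween n D U v c u :=
      sb_rotate hUD hdisj hc2 hu (sb_rotate hUD hdisj hu hv h1)
    exact no_sep hUD hdisj hσ hc2 hv hs hub e2
      (ue_comm e1' (Ne.symm (sb_ne_left h1')))

/-- `TriWith` gives the two unordered edges through `c`. -/
lemma triwith_ue {T : Finset (ℕ × ℕ)} {δ : ℕ × ℕ} (hδ : δ.1 < δ.2)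
    (h : TriWith n D U T δ c) (hc1 : c ≠ δ.1) (hc2 : c ≠ δ.2) :
    UE n D U T δ.1 c ∧ UE n D U T c δ.2 := by
  rw [TriWith] at h
  split_ifs at h with g1 g2
  · obtain ⟨-, -, -, he1, he2, he3⟩ := h
    constructor
    · rw [UE, if_neg (by omega)]; exact he1
    · rw [UE, if_pos (by omega)]; exact he3
  · obtain ⟨-, -, -, he1, he2, he3⟩ := h
    constructor
    · rw [UE, if_pos (by omega)]; exact he1
    · rw [UE, if_pos (by omega)]; exact he2
  · obtain ⟨-, -, -, he1, he2, he3⟩ := h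
    constructor
    · rw [UE, if_pos (by omega)]; exact he3
    · rw [UE, if_neg (by omega)]; exact he2

end Uniq
section Toggle

variable {n : ℕ} {D U : Finset ℕ} {σ : Equiv.Perm ℕ} {a b v : ℕ} {i : ℕ}

lemma mem_pred (hUD : D ∪ U = Finset.Icc 1 (n + 1)) (hdisj : Disjoint D U)
    (hσ : ∀ j ∈ Finset.Icc 1 (n + 1), σ j ∈ Finset.Icc 1 (n + 1))
    (hv : v ∈ Vset n D σ i) (hne : σ v ≠ i) : v ∈ Vset n D σ (i - 1) := by
  rw [mem_Vset_iff hUD hdisj hσ] at hv ⊢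
  rcases hv with h | h | ⟨h, h2⟩ | ⟨h, h2⟩
  · exact Or.inl h
  · exact Or.inr (Or.inl h)
  · exact Or.inr (Or.inr (Or.inl ⟨h, by omega⟩))
  · exact Or.inr (Or.inr (Or.inr ⟨h, by omega⟩))

lemma mem_succ (hUD : D ∪ U = Finset.Icc 1 (n + 1)) (hdisj : Disjoint D U)
    (hσ : ∀ j ∈ Finset.Icc 1 (n + 1), σ j ∈ Finset.Icc 1 (n + 1))
    (hv : v ∈ Vset n D σ i) (hne : σ v ≠ i + 1) : v ∈ Vset n D σ (i + 1) := by
  rw [mem_Vset_iff hUD hdisj hσ] at hv ⊢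
  rcases hv with h | h | ⟨h, h2⟩ | ⟨h, h2⟩
  · exact Or.inl h
  · exact Or.inr (Or.inl h)
  · exact Or.inr (Or.inr (Or.inl ⟨h, by omega⟩))
  · exact Or.inr (Or.inr (Or.inr ⟨h, by omega⟩))

lemma absent_pred (hUD : D ∪ U = Finset.Icc 1 (n + 1)) (hdisj : Disjoint D U)
    (hσ : ∀ j ∈ Finset.Icc 1 (n + 1), σ j ∈ Finset.Icc 1 (n + 1))
    (hv : v ∉ Vset n D σ i) (h0 : 0 < v) (h1 : v ≤ n + 1) (hne : σ v ≠ i) :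
    v ∉ Vset n D σ (i - 1) := by
  rcases label_cases hUD h0 h1 with h | h
  · rw [D_mem_Vset_iff hUD hdisj hσ h] at hv ⊢
    omega
  · rw [U_mem_Vset_iff hUD hdisj hσ h] at hv ⊢
    omega

lemma absent_succ (hUD : D ∪ U = Finset.Icc 1 (n + 1)) (hdisj : Disjoint D U)
    (hσ : ∀ j ∈ Finset.Icc 1 (n + 1), σ j ∈ Finset.Icc 1 (n + 1))
    (hv : v ∉ Vset n D σ i) (h0 : 0 < v) (h1 : v ≤ n + 1) (hne : σ v ≠ i + 1) :
    v ∉ Vset n D σ (i + 1) := by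
  rcases label_cases hUD h0 h1 with h | h
  · rw [D_mem_Vset_iff hUD hdisj hσ h] at hv ⊢
    omega
  · rw [U_mem_Vset_iff hUD hdisj hσ h] at hv ⊢
    omega

lemma creation_toggle (hUD : D ∪ U = Finset.Icc 1 (n + 1)) (hdisj : Disjoint D U)
    (hσ : ∀ j ∈ Finset.Icc 1 (n + 1), σ j ∈ Finset.Icc 1 (n + 1)) {L : ℕ} (hL1 : 1 ≤ L)
    (hc : ConsecIn (Vset n D σ L) (a, b)) (hnc : ¬ ConsecIn (Vset n D σ (L - 1)) (a, b)) :
    ∃ j, σ j = L ∧ ((j ∈ D ∧ a < j ∧ j < b) ∨ (j ∈ U ∧ (j = a ∨ j = b))) := by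
  have hab : a < b := hc.2.2.1
  have ha2 : a ≤ n + 2 := Vset_le hUD hdisj hσ hc.1
  have hb2 : b ≤ n + 2 := Vset_le hUD hdisj hσ hc.2.1
  by_cases h1 : a ∈ Vset n D σ (L - 1)
  · by_cases h2 : b ∈ Vset n D σ (L - 1)
    · have hmid : ¬ ∀ c ∈ Vset n D σ (L - 1), ¬ (a < c ∧ c < b) :=
        fun hm => hnc ⟨h1, h2, hab, hm⟩
      push_neg at hmid
      obtain ⟨c, hcV, g1, g2⟩ := hmid
      have hc2n : c ≤ n + 2 := Vset_le hUD hdisj hσ hcV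
      rcases vert_cases hUD hc2n with rfl | rfl | h | h
      · omega
      · omega
      · have p1 := (D_mem_Vset_iff hUD hdisj hσ h).1 hcV
        have p2 : σ c ≤ L := by
          have := (consec_mid_absent hUD hdisj hσ hc g1 g2).1 h
          omega
        exact ⟨c, by omega, Or.inl ⟨h, g1, g2⟩⟩
      · have p1 := (U_mem_Vset_iff hUD hdisj hσ h).1 hcV
        have hcL : c ∈ Vset n D σ L := (U_mem_Vset_iff hUD hdisj hσ h).2 (by omega)
        exact absurd ⟨g1, g2⟩ (hc.2.2.2 c hcL)
    · rcases vert_cases hUD hb2 with rfl | rfl | h | h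
      · omega
      · exact absurd top_mem_Vset h2
      · exfalso
        have := (D_mem_Vset_iff hUD hdisj hσ h).1 hc.2.1
        exact h2 ((D_mem_Vset_iff hUD hdisj hσ h).2 (by omega))
      · have p1 := (U_mem_Vset_iff hUD hdisj hσ h).1 hc.2.1
        have p2 : ¬ σ b ≤ L - 1 := fun hh => h2 ((U_mem_Vset_iff hUD hdisj hσ h).2 hh)
        exact ⟨b, by omega, Or.inr ⟨h, Or.inr rfl⟩⟩
  · rcases vert_cases hUD ha2 with rfl | rfl | h | h
    · exact absurd zero_mem_Vset h1
    · omega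
    · exfalso
      have := (D_mem_Vset_iff hUD hdisj hσ h).1 hc.1
      exact h1 ((D_mem_Vset_iff hUD hdisj hσ h).2 (by omega))
    · have p1 := (U_mem_Vset_iff hUD hdisj hσ h).1 hc.1
      have p2 : ¬ σ a ≤ L - 1 := fun hh => h1 ((U_mem_Vset_iff hUD hdisj hσ h).2 hh)
      exact ⟨a, by omega, Or.inr ⟨h, Or.inl rfl⟩⟩

lemma destruction_toggle (hUD : D ∪ U = Finset.Icc 1 (n + 1)) (hdisj : Disjoint D U)
    (hσ : ∀ j ∈ Finset.Icc 1 (n + 1), σ j ∈ Finset.Icc 1 (n + 1)) {R : ℕ}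
    (hc : ConsecIn (Vset n D σ R) (a, b)) (hnc : ¬ ConsecIn (Vset n D σ (R + 1)) (a, b)) :
    ∃ j, σ j = R + 1 ∧ ((j ∈ U ∧ a < j ∧ j < b) ∨ (j ∈ D ∧ (j = a ∨ j = b))) := by
  have hab : a < b := hc.2.2.1
  have ha2 : a ≤ n + 2 := Vset_le hUD hdisj hσ hc.1
  have hb2 : b ≤ n + 2 := Vset_le hUD hdisj hσ hc.2.1
  by_cases h1 : a ∈ Vset n D σ (R + 1)
  · by_cases h2 : b ∈ Vset n D σ (R + 1)
    · have hmid : ¬ ∀ c ∈ Vset n D σ (R + 1), ¬ (a < c ∧ c < b) :=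
        fun hm => hnc ⟨h1, h2, hab, hm⟩
      push_neg at hmid
      obtain ⟨c, hcV, g1, g2⟩ := hmid
      have hc2n : c ≤ n + 2 := Vset_le hUD hdisj hσ hcV
      rcases vert_cases hUD hc2n with rfl | rfl | h | h
      · omega
      · omega
      · exfalso
        have p1 := (D_mem_Vset_iff hUD hdisj hσ h).1 hcV
        have hcR : c ∈ Vset n D σ R := (D_mem_Vset_iff hUD hdisj hσ h).2 (by omega)
        exact hc.2.2.2 c hcR ⟨g1, g2⟩
      · have p1 := (U_mem_Vset_iff hUD hdisj hσ h).1 hcV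
        have p2 : R < σ c := by
          have := (consec_mid_absent hUD hdisj hσ hc g1 g2).2 h
          omega
        exact ⟨c, by omega, Or.inl ⟨h, g1, g2⟩⟩
    · rcases vert_cases hUD hb2 with rfl | rfl | h | h
      · omega
      · exact absurd top_mem_Vset h2
      · have p1 := (D_mem_Vset_iff hUD hdisj hσ h).1 hc.2.1
        have p2 : ¬ R + 1 < σ b := fun hh => h2 ((D_mem_Vset_iff hUD hdisj hσ h).2 hh)
        exact ⟨b, by omega, Or.inr ⟨h, Or.inr rfl⟩⟩
      · exfalso
        have := (U_mem_Vset_iff hUD hdisj hσ h).1 hc.2.1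
        exact h2 ((U_mem_Vset_iff hUD hdisj hσ h).2 (by omega))
  · rcases vert_cases hUD ha2 with rfl | rfl | h | h
    · exact absurd zero_mem_Vset h1
    · omega
    · have p1 := (D_mem_Vset_iff hUD hdisj hσ h).1 hc.1
      have p2 : ¬ R + 1 < σ a := fun hh => h1 ((D_mem_Vset_iff hUD hdisj hσ h).2 hh)
      exact ⟨a, by omega, Or.inr ⟨h, Or.inl rfl⟩⟩
    · exfalso
      have := (U_mem_Vset_iff hUD hdisj hσ h).1 hc.1
      exact h1 ((U_mem_Vset_iff hUD hdisj hσ h).2 (by omega))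

end Toggle
section Cert

variable {n : ℕ} {D U : Finset ℕ} {σ : Equiv.Perm ℕ} {a b c : ℕ}

lemma midOf_low (h1 : c < a) : midOf a b c = a := by
  unfold midOf; rw [if_pos h1]

lemma midOf_mid (h1 : a < c) (h2 : c < b) : midOf a b c = c := by
  unfold midOf; rw [if_neg (by omega), if_pos h2]

lemma midOf_high (hab : a < b) (h2 : b < c) : midOf a b c = b := by
  unfold midOf; rw [if_neg (by omega), if_neg (by omega)]

variable {T : Finset (ℕ × ℕ)}

lemma triwith_low (h1 : c < a) (ht : IsTriangleOf n D U T c a b) :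
    TriWith n D U T (a, b) c := by
  unfold TriWith
  rw [if_pos (show c < (a, b).1 from h1)]
  exact ht

lemma triwith_mid (h1 : a < c) (h2 : c < b) (ht : IsTriangleOf n D U T a c b) :
    TriWith n D U T (a, b) c := by
  unfold TriWith
  rw [if_neg (show ¬ c < (a, b).1 by simp only; omega), if_pos (show c < (a, b).2 from h2)]
  exact ht

lemma triwith_high (hab : a < b) (h2 : b < c) (ht : IsTriangleOf n D U T a b c) :
    TriWith n D U T (a, b) c := by
  unfold TriWith
  rw [if_neg (show ¬ c < (a, b).1 by simp only; omega),
    if_neg (show ¬ c < (a, b).2 by simp only; omega)]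
  exact ht

lemma below_cert (hUD : D ∪ U = Finset.Icc 1 (n + 1)) (hdisj : Disjoint D U)
    (hσ : ∀ j ∈ Finset.Icc 1 (n + 1), σ j ∈ Finset.Icc 1 (n + 1)) {L : ℕ}
    (hδ : (a, b) ∈ sigmaTri n D U σ)
    (hcL : ConsecIn (Vset n D σ L) (a, b)) (hL1 : 1 ≤ L) (hLn : L ≤ n + 1)
    (hj : ∃ j, σ j = L ∧ ((j ∈ D ∧ a < j ∧ j < b) ∨ (j ∈ U ∧ (j = a ∨ j = b)))) :
    ∃ c, StrictBetween n D U a b c ∧ TriWith n D U (sigmaTri n D U σ) (a, b) c ∧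
      σ (midOf a b c) = L := by
  obtain ⟨j, hjL, hjc⟩ := hj
  have hab : a < b := hcL.2.2.1
  have ha2 : a ≤ n + 2 := Vset_le hUD hdisj hσ hcL.1
  have hb2 : b ≤ n + 2 := Vset_le hUD hdisj hσ hcL.2.1
  have hinj : ∀ c1 c2 : ℕ, σ c1 = σ c2 → c1 = c2 := fun _ _ h => σ.injective h
  have hanotv : ∀ c, a < c → c < b → c ∉ Vset n D σ L :=
    fun c g1 g2 hm => hcL.2.2.2 c hm ⟨g1, g2⟩
  rcases hjc with ⟨hjD, hja, hjb⟩ | ⟨hjU, hor⟩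
  · obtain ⟨j1, j2⟩ := mem_D_bounds hUD hjD
    have hne : ∀ c, c ≠ j → σ c ≠ L := fun c hc hh => hc (hinj _ _ (hh.trans hjL.symm))
    have hc1 : ConsecIn (Vset n D σ (L - 1)) (a, j) := by
      refine ⟨mem_pred hUD hdisj hσ hcL.1 (hne a (by omega)),
        (D_mem_Vset_iff hUD hdisj hσ hjD).2 (by omega), hja, ?_⟩
      rintro c hcV ⟨g1, g2⟩
      exact absent_pred hUD hdisj hσ (hanotv c g1 (by omega)) (by omega) (by omega)
        (hne c (by omega)) hcV
    have hc2 : ConsecIn (Vset n D σ (L - 1)) (j, b) := by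
      refine ⟨(D_mem_Vset_iff hUD hdisj hσ hjD).2 (by omega),
        mem_pred hUD hdisj hσ hcL.2.1 (hne b (by omega)), hjb, ?_⟩
      rintro c hcV ⟨g1, g2⟩
      exact absent_pred hUD hdisj hσ (hanotv c (by omega) g2) (by omega) (by omega)
        (hne c (by omega)) hcV
    refine ⟨j, sb_D_between hUD hdisj hjD hja hjb hb2,
      triwith_mid hja hjb ⟨hja, hjb, hb2,
        edge_of_consec hUD hdisj hσ hc1 (by omega),
        edge_of_consec hUD hdisj hσ hc2 (by omega), Or.inl hδ⟩, ?_⟩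
    rw [midOf_mid hja hjb]
    exact hjL
  · obtain ⟨ju1, ju2⟩ := mem_U_bounds hUD hjU
    have hne : ∀ c, c ≠ j → σ c ≠ L := fun c hc hh => hc (hinj _ _ (hh.trans hjL.symm))
    rcases hor with h | h
    · -- j = a ∈ U
      rw [h] at hjU hjL ju1 ju2 hne
      obtain ⟨e, hconsea, hmaxe⟩ := exists_prev zero_mem_Vset hcL.1 (by omega)
      have hea : e < a := hconsea.2.2.1
      have heV : e ∈ Vset n D σ L := hconsea.1
      have he2 : e ≤ n + 2 := Vset_le hUD hdisj hσ heV
      have hnotvea : ∀ c, e < c → c < a → c ∉ Vset n D σ L :=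
        fun c g1 g2 hm => hconsea.2.2.2 c hm ⟨g1, g2⟩
      have hc1 : ConsecIn (Vset n D σ (L - 1)) (e, b) := by
        refine ⟨mem_pred hUD hdisj hσ heV (hne e (by omega)),
          mem_pred hUD hdisj hσ hcL.2.1 (hne b (by omega)), by omega, ?_⟩
        rintro c hcV ⟨g1, g2⟩
        rcases lt_trichotomy c a with t | t | t
        · exact absent_pred hUD hdisj hσ (hnotvea c g1 t) (by omega) (by omega)
            (hne c (by omega)) hcV
        · subst t
          rw [U_mem_Vset_iff hUD hdisj hσ hjU] at hcV
          omega
        · exact absent_pred hUD hdisj hσ (hanotv c t g2) (by omega) (by omega)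
            (hne c (by omega)) hcV
      refine ⟨e, sb_lt_up hUD hdisj hjU hab hea hb2,
        triwith_low hea ⟨hea, hab, hb2,
          edge_of_consec hUD hdisj hσ hconsea (by omega), Or.inl hδ,
          edge_of_consec hUD hdisj hσ hc1 (by omega)⟩, ?_⟩
      rw [midOf_low hea]
      exact hjL
    · -- j = b ∈ U
      rw [h] at hjU hjL ju1 ju2 hne
      obtain ⟨f, hconsbf, hminf⟩ := exists_next top_mem_Vset hcL.2.1 (by omega)
      have hbf : b < f := hconsbf.2.2.1
      have hfV : f ∈ Vset n D σ L := hconsbf.2.1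
      have hf2 : f ≤ n + 2 := Vset_le hUD hdisj hσ hfV
      have hnotvbf : ∀ c, b < c → c < f → c ∉ Vset n D σ L :=
        fun c g1 g2 hm => hconsbf.2.2.2 c hm ⟨g1, g2⟩
      have hc1 : ConsecIn (Vset n D σ (L - 1)) (a, f) := by
        refine ⟨mem_pred hUD hdisj hσ hcL.1 (hne a (by omega)),
          mem_pred hUD hdisj hσ hfV (hne f (by omega)), by omega, ?_⟩
        rintro c hcV ⟨g1, g2⟩
        rcases lt_trichotomy c b with t | t | t
        · exact absent_pred hUD hdisj hσ (hanotv c g1 t) (by omega) (by omega)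
            (hne c (by omega)) hcV
        · subst t
          rw [U_mem_Vset_iff hUD hdisj hσ hjU] at hcV
          omega
        · exact absent_pred hUD hdisj hσ (hnotvbf c t g2) (by omega) (by omega)
            (hne c (by omega)) hcV
      refine ⟨f, sb_gt_up hUD hdisj hjU hab hbf hf2,
        triwith_high hab hbf ⟨hab, hbf, hf2, Or.inl hδ,
          edge_of_consec hUD hdisj hσ hconsbf (by omega),
          edge_of_consec hUD hdisj hσ hc1 (by omega)⟩, ?_⟩
      rw [midOf_high hab hbf]
      exact hjL

lemma above_cert (hUD : D ∪ U = Finset.Icc 1 (n + 1)) (hdisj : Disjoint D U)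
    (hσ : ∀ j ∈ Finset.Icc 1 (n + 1), σ j ∈ Finset.Icc 1 (n + 1)) {R : ℕ}
    (hδ : (a, b) ∈ sigmaTri n D U σ)
    (hcR : ConsecIn (Vset n D σ R) (a, b)) (hRn : R ≤ n)
    (hj : ∃ j, σ j = R + 1 ∧ ((j ∈ U ∧ a < j ∧ j < b) ∨ (j ∈ D ∧ (j = a ∨ j = b)))) :
    ∃ c, StrictBetween n D U b a c ∧ TriWith n D U (sigmaTri n D U σ) (a, b) c ∧
      σ (midOf a b c) = R + 1 := by
  obtain ⟨j, hjR, hjc⟩ := hj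
  have hab : a < b := hcR.2.2.1
  have ha2 : a ≤ n + 2 := Vset_le hUD hdisj hσ hcR.1
  have hb2 : b ≤ n + 2 := Vset_le hUD hdisj hσ hcR.2.1
  have hinj : ∀ c1 c2 : ℕ, σ c1 = σ c2 → c1 = c2 := fun _ _ h => σ.injective h
  have hanotv : ∀ c, a < c → c < b → c ∉ Vset n D σ R :=
    fun c g1 g2 hm => hcR.2.2.2 c hm ⟨g1, g2⟩
  rcases hjc with ⟨hjU, hja, hjb⟩ | ⟨hjD, hor⟩
  · obtain ⟨j1, j2⟩ := mem_U_bounds hUD hjU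
    have hne : ∀ c, c ≠ j → σ c ≠ R + 1 := fun c hc hh => hc (hinj _ _ (hh.trans hjR.symm))
    have hc1 : ConsecIn (Vset n D σ (R + 1)) (a, j) := by
      refine ⟨mem_succ hUD hdisj hσ hcR.1 (hne a (by omega)),
        (U_mem_Vset_iff hUD hdisj hσ hjU).2 (by omega), hja, ?_⟩
      rintro c hcV ⟨g1, g2⟩
      exact absent_succ hUD hdisj hσ (hanotv c g1 (by omega)) (by omega) (by omega)
        (hne c (by omega)) hcV
    have hc2 : ConsecIn (Vset n D σ (R + 1)) (j, b) := by
      refine ⟨(U_mem_Vset_iff hUD hdisj hσ hjU).2 (by omega),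
        mem_succ hUD hdisj hσ hcR.2.1 (hne b (by omega)), hjb, ?_⟩
      rintro c hcV ⟨g1, g2⟩
      exact absent_succ hUD hdisj hσ (hanotv c (by omega) g2) (by omega) (by omega)
        (hne c (by omega)) hcV
    refine ⟨j, sb_U_between hUD hdisj hjU hja hjb hb2,
      triwith_mid hja hjb ⟨hja, hjb, hb2,
        edge_of_consec hUD hdisj hσ hc1 (by omega),
        edge_of_consec hUD hdisj hσ hc2 (by omega), Or.inl hδ⟩, ?_⟩
    rw [midOf_mid hja hjb]
    exact hjR
  · obtain ⟨jd1, jd2⟩ := mem_D_bounds hUD hjD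
    have hne : ∀ c, c ≠ j → σ c ≠ R + 1 := fun c hc hh => hc (hinj _ _ (hh.trans hjR.symm))
    rcases hor with h | h
    · -- j = a ∈ D, removed at R+1
      rw [h] at hjD hjR jd1 jd2 hne
      have haabs : a ∉ Vset n D σ (R + 1) := by
        rw [D_mem_Vset_iff hUD hdisj hσ hjD]
        omega
      obtain ⟨e, f, hconsef, he, hf, hmax, hmin⟩ :=
        exists_span zero_mem_Vset top_mem_Vset haabs (by omega) (by omega)
      have hbmem : b ∈ Vset n D σ (R + 1) := mem_succ hUD hdisj hσ hcR.2.1 (hne b (by omega))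
      have hfb : f = b := by
        have hfle : f ≤ b := hmin b hbmem hab
        by_contra hh
        have hfab : f < b := by omega
        exact absent_succ hUD hdisj hσ (hanotv f hf hfab) (by omega) (by omega)
          (hne f (by omega)) hconsef.2.1
      rw [hfb] at hconsef
      have heV1 : e ∈ Vset n D σ (R + 1) := hconsef.1
      have he2 : e ≤ n + 2 := Vset_le hUD hdisj hσ heV1
      have hc_ea : ConsecIn (Vset n D σ R) (e, a) := by
        refine ⟨?_, hcR.1, he, ?_⟩
        · have := mem_pred hUD hdisj hσ heV1 (hne e (by omega))
          simpa using this
        · rintro c hcV ⟨g1, g2⟩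
          have hcabs : c ∉ Vset n D σ (R + 1) := by
            intro hm
            have := hmax c hm g2
            omega
          have := absent_pred hUD hdisj hσ hcabs (by omega) (by omega) (hne c (by omega))
          simp only [Nat.add_sub_cancel] at this
          exact this hcV
      have hSB : StrictBetween n D U b a e := by
        rcases sb_total hUD hdisj ha2 hb2 he2 (by omega) (by omega) (by omega) with hh | hh
        · exact absurd hh (not_sb_lt_low hUD hdisj ha2 hb2
            (not_mem_U_of_D hdisj hjD) hab he he2)
        · exact hh
      refine ⟨e, hSB,
        triwith_low he ⟨he, hab, hb2,
          edge_of_consec hUD hdisj hσ hc_ea (by omega), Or.inl hδ,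
          edge_of_consec hUD hdisj hσ hconsef (by omega)⟩, ?_⟩
      rw [midOf_low he]
      exact hjR
    · -- j = b ∈ D, removed at R+1
      rw [h] at hjD hjR jd1 jd2 hne
      have hbabs : b ∉ Vset n D σ (R + 1) := by
        rw [D_mem_Vset_iff hUD hdisj hσ hjD]
        omega
      obtain ⟨e, f, hconsef, he, hf, hmax, hmin⟩ :=
        exists_span zero_mem_Vset top_mem_Vset hbabs (by omega) (by omega)
      have hamem : a ∈ Vset n D σ (R + 1) := mem_succ hUD hdisj hσ hcR.1 (hne a (by omega))
      have hea : e = a := by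
        have hale : a ≤ e := hmax a hamem hab
        by_contra hh
        have haeb : a < e := by omega
        exact absent_succ hUD hdisj hσ (hanotv e haeb he) (by omega) (by omega)
          (hne e (by omega)) hconsef.1
      rw [hea] at hconsef
      have hfV1 : f ∈ Vset n D σ (R + 1) := hconsef.2.1
      have hf2 : f ≤ n + 2 := Vset_le hUD hdisj hσ hfV1
      have hc_bf : ConsecIn (Vset n D σ R) (b, f) := by
        refine ⟨hcR.2.1, ?_, hf, ?_⟩
        · have := mem_pred hUD hdisj hσ hfV1 (hne f (by omega))
          simpa using this
        · rintro c hcV ⟨g1, g2⟩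
          have hcabs : c ∉ Vset n D σ (R + 1) := by
            intro hm
            have := hmin c hm g1
            omega
          have := absent_pred hUD hdisj hσ hcabs (by omega) (by omega) (hne c (by omega))
          simp only [Nat.add_sub_cancel] at this
          exact this hcV
      have hSB : StrictBetween n D U b a f := by
        rcases sb_total hUD hdisj ha2 hb2 hf2 (by omega) (by omega) (by omega) with hh | hh
        · exact absurd hh (not_sb_gt_low hUD hdisj ha2 hb2
            (not_mem_U_of_D hdisj hjD) hab hf hf2)
        · exact hh
      refine ⟨f, hSB,
        triwith_high hab hf ⟨hab, hf, hf2, Or.inl hδ,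
          edge_of_consec hUD hdisj hσ hc_bf (by omega),
          edge_of_consec hUD hdisj hσ hconsef (by omega)⟩, ?_⟩
      rw [midOf_high hab hf]
      exact hjR

lemma spine_lt (hUD : D ∪ U = Finset.Icc 1 (n + 1)) (hdisj : Disjoint D U)
    (hσ : ∀ j ∈ Finset.Icc 1 (n + 1), σ j ∈ Finset.Icc 1 (n + 1)) {δ : ℕ × ℕ}
    (hδ : δ ∈ sigmaTri n D U σ) :
    σ (spineSrc n D U (sigmaTri n D U σ) δ) < σ (spineTgt n D U (sigmaTri n D U σ) δ) := by
  obtain ⟨a, b⟩ := δ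
  obtain ⟨hint, i₀, hi₀, hcons₀⟩ := mem_sigmaTri_iff.1 hδ
  have hab : a < b := hint.1.1
  have hb2 : b ≤ n + 2 := hint.1.2
  have ha2 : a ≤ n + 2 := by omega
  classical
  set J := (Finset.range (n + 2)).filter (fun i => ConsecIn (Vset n D σ i) (a, b)) with hJ
  have hmemJ : ∀ i, i ∈ J ↔ i < n + 2 ∧ ConsecIn (Vset n D σ i) (a, b) := by
    intro i
    rw [hJ, Finset.mem_filter, Finset.mem_range]
  have hJne : J.Nonempty := ⟨i₀, (hmemJ i₀).2 ⟨by omega, hcons₀⟩⟩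
  obtain ⟨hLlt, hcL⟩ := (hmemJ _).1 (J.min'_mem hJne)
  obtain ⟨hRlt, hcR⟩ := (hmemJ _).1 (J.max'_mem hJne)
  have hLR : J.min' hJne ≤ J.max' hJne := Finset.min'_le J _ (J.max'_mem hJne)
  have hL1 : 1 ≤ J.min' hJne := by
    by_contra hh
    have h0 : J.min' hJne = 0 := by omega
    rw [h0] at hcL
    exact hint.2 (consec_V0_boundary hUD hdisj hσ hcL)
  have hRn : J.max' hJne ≤ n := by
    by_contra hh
    have h0 : J.max' hJne = n + 1 := by omega
    rw [h0] at hcR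
    exact hint.2 (consec_Vlast_boundary hUD hdisj hσ hcR)
  have hncL : ¬ ConsecIn (Vset n D σ (J.min' hJne - 1)) (a, b) := by
    intro h
    have hmem : J.min' hJne - 1 ∈ J := (hmemJ _).2 ⟨by omega, h⟩
    have := J.min'_le _ hmem
    omega
  have hncR : ¬ ConsecIn (Vset n D σ (J.max' hJne + 1)) (a, b) := by
    intro h
    have hmem : J.max' hJne + 1 ∈ J := (hmemJ _).2 ⟨by omega, h⟩
    have := J.le_max' _ hmem
    omega
  obtain ⟨cb, hSBb, hTWb, hmb⟩ := below_cert hUD hdisj hσ hδ hcL hL1 (by omega)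
    (creation_toggle hUD hdisj hσ hL1 hcL hncL)
  obtain ⟨ca, hSBa, hTWa, hma⟩ := above_cert hUD hdisj hσ hδ hcR hRn
    (destruction_toggle hUD hdisj hσ hcR hncR)
  have hsrc : σ (spineSrc n D U (sigmaTri n D U σ) (a, b)) = J.min' hJne := by
    unfold spineSrc
    have hex : ∃ c, StrictBetween n D U (a, b).1 (a, b).2 c ∧
        TriWith n D U (sigmaTri n D U σ) (a, b) c := ⟨cb, hSBb, hTWb⟩
    rw [dif_pos hex]
    obtain ⟨hw1, hw2⟩ := hex.choose_spec
    have hwe := triwith_ue (show (a, b).1 < (a, b).2 from hab) hw2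
      (sb_ne_left hw1) (sb_ne_right hw1)
    have hce := triwith_ue (show (a, b).1 < (a, b).2 from hab) hTWb
      (sb_ne_left hSBb) (sb_ne_right hSBb)
    have heq : hex.choose = cb :=
      uniq_core hUD hdisj hσ ha2 hb2 hw1 hSBb hwe.1 hwe.2 hce.1 hce.2
    rw [heq]
    exact hmb
  have htgt : σ (spineTgt n D U (sigmaTri n D U σ) (a, b)) = J.max' hJne + 1 := by
    unfold spineTgt
    have hex : ∃ c, StrictBetween n D U (a, b).2 (a, b).1 c ∧
        TriWith n D U (sigmaTri n D U σ) (a, b) c := ⟨ca, hSBa, hTWa⟩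
    rw [dif_pos hex]
    obtain ⟨hw1, hw2⟩ := hex.choose_spec
    have hwa : hex.choose ≠ a := sb_ne_right hw1
    have hwb : hex.choose ≠ b := sb_ne_left hw1
    have hwe := triwith_ue (show (a, b).1 < (a, b).2 from hab) hw2 hwa hwb
    have hSBa' : StrictBetween n D U (a, b).2 (a, b).1 ca := hSBa
    have hna : ca ≠ a := sb_ne_right hSBa
    have hnb : ca ≠ b := sb_ne_left hSBa
    have hce := triwith_ue (show (a, b).1 < (a, b).2 from hab) hTWa hna hnb
    have heq : hex.choose = ca := by
      apply uniq_core hUD hdisj hσ hb2 ha2 hw1 hSBa'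
        (ue_comm hwe.2 hwb) (ue_comm hwe.1 (Ne.symm hwa))
        (ue_comm hce.2 hnb) (ue_comm hce.1 (Ne.symm hna))
    rw [heq]
    exact hma
  rw [hsrc, htgt]
  omega

end Cert
/-- The internal diagonals appearing along the sweep
`π_0, π_1, …, π_{n+1}` associated to a permutation `σ` of `[n+1]` form a triangulation
`T` of `P`, and `σ` is a linear extension of the spine of `T`. -/
theorem sweep_gives_triangulation_with_linear_extension (n : ℕ) (hn : 1 ≤ n)
    (D U : Finset ℕ) (hUD : D ∪ U = Finset.Icc 1 (n + 1)) (hdisj : Disjoint D U)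
    (σ : Equiv.Perm ℕ) (hσ : ∀ j ∈ Finset.Icc 1 (n + 1), σ j ∈ Finset.Icc 1 (n + 1)) :
    IsTriangulation n D U (sigmaTri n D U σ) ∧
    ∀ δ ∈ sigmaTri n D U σ,
      σ (spineSrc n D U (sigmaTri n D U σ) δ) < σ (spineTgt n D U (sigmaTri n D U σ) δ) := by
  constructor
  · exact ⟨fun δ hδ => (mem_sigmaTri_iff.1 hδ).1,
      sigmaTri_noncross hUD hdisj hσ,
      sigmaTri_max hUD hdisj hσ⟩
  · intro δ hδ
    exact spine_lt hUD hdisj hσ hδ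

end Spines
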